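/- arXiv:2201.11020 — 5 statements merged into one kernel-verified Lean document; each statement's English description precedes it below -/
import Mathlib

section
/- There exists a unique basic matrix resolvent R(ξ), i.e. a unique 2×2 matrix R(ξ) with entries in 𝒜[ε][[ξ⁻¹]] satisfying conditions (i)–(iv). -/
set_option synthInstance.maxHeartbeats 1000000
set_option maxHeartbeats 1000000

noncomputable section

open scoped BigOperators

/-- Index set of the generators `qᵢ, rᵢ` of 𝒜. -/
inductive NLSVar : Type
  | q : ℕ → NLSVar
  | r : ℕ → NLSVar

/-- 𝒜 = ℂ[q₀, r₀, q₁, r₁, …]. -/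
abbrev NLSA : Type := MvPolynomial NLSVar ℂ

/-- 𝒜[ε, ε⁻¹], as Laurent polynomials in ε over 𝒜. -/
abbrev NLSE : Type := LaurentPolynomial NLSA

instance : CommRing NLSE := inferInstance
instance : Algebra ℂ NLSE := inferInstance

/-- The generator qᵢ viewed in 𝒜[ε,ε⁻¹]. -/
def qv (i : ℕ) : NLSE := LaurentPolynomial.C (MvPolynomial.X (NLSVar.q i))

/-- The generator rᵢ viewed in 𝒜[ε,ε⁻¹]. -/
def rv (i : ℕ) : NLSE := LaurentPolynomial.C (MvPolynomial.X (NLSVar.r i))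

/-- ε ∈ 𝒜[ε,ε⁻¹]. -/
def eps : NLSE := LaurentPolynomial.T 1

/-- ε⁻¹ ∈ 𝒜[ε,ε⁻¹]. -/
def epsInv : NLSE := LaurentPolynomial.T (-1)

/-- Membership in the subring 𝒜[ε] ⊆ 𝒜[ε,ε⁻¹]: no negative powers of ε. -/
def inAE (x : NLSE) : Prop := ∀ n : ℤ, n < 0 → (show ℤ →₀ NLSA from AddMonoidAlgebra.coeff x) n = 0

/-- The Laurent-series ring 𝒜[ε,ε⁻¹][[ξ⁻¹]][ξ]; the Hahn-series exponent `n`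
records the power of ξ⁻¹. -/
abbrev NLSL : Type := LaurentSeries NLSE

instance : CommRing NLSL := inferInstance
instance : Algebra ℂ NLSL := inferInstance

/-- ξ as a Laurent series in ξ⁻¹. -/
def xiL : NLSL := HahnSeries.single (-1 : ℤ) 1

/-- Apply a zero-preserving map to all coefficients of a Laurent series. -/
def coeffMap {R S : Type*} [Zero R] [Zero S] (f : ZeroHom R S)
    (x : HahnSeries ℤ R) : HahnSeries ℤ S where
  coeff n := f (x.coeff n)
  isPWO_support' := x.isPWO_support'.mono (by
    intro n hn
    simp only [Function.mem_support, ne_eq] at hn ⊢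
    exact fun h => hn (by rw [h, map_zero]))

/-- The derivation ∂, applied coefficientwise to a Laurent series in ξ⁻¹. -/
def dmap (d : Derivation ℂ NLSE NLSE) : NLSL → NLSL :=
  coeffMap ⟨fun x => d x, map_zero d⟩

/-- `∂` is the (unique) derivation of 𝒜[ε,ε⁻¹] with ∂(qᵢ)=qᵢ₊₁, ∂(rᵢ)=rᵢ₊₁, ∂(ε)=0. -/
def IsDel (del : Derivation ℂ NLSE NLSE) : Prop :=
  (∀ i, del (qv i) = qv (i + 1)) ∧ (∀ i, del (rv i) = rv (i + 1)) ∧ del eps = 0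

/-- The constant embedding 𝒜[ε,ε⁻¹] → 𝒜[ε,ε⁻¹][[ξ⁻¹]][ξ]. -/
def CL (x : NLSE) : NLSL := HahnSeries.C x

/-- The matrix U(ξ) = [[−ξ, −q],[r, ξ]]. -/
def Umat : Matrix (Fin 2) (Fin 2) NLSL :=
  !![-xiL, -(CL (qv 0)); CL (rv 0), xiL]

/-- The matrix [[2+a, b],[c, −a]]. -/
def Rmat (a b c : NLSL) : Matrix (Fin 2) (Fin 2) NLSL := !![2 + a, b; c, -a]

/-- `a, b, c` are the entries of the (unique) basic matrix resolvent
R(ξ) = [[2+a(ξ), b(ξ)],[c(ξ), −a(ξ)]]. -/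
def IsMR (del : Derivation ℂ NLSE NLSE) (a b c : NLSL) : Prop :=
  (∀ n : ℤ, n ≤ 0 → a.coeff n = 0) ∧
  (∀ n : ℤ, n ≤ 0 → b.coeff n = 0) ∧
  (∀ n : ℤ, n ≤ 0 → c.coeff n = 0) ∧
  (∀ n : ℤ, inAE (a.coeff n)) ∧ (∀ n : ℤ, inAE (b.coeff n)) ∧ (∀ n : ℤ, inAE (c.coeff n)) ∧
  CL eps • (Rmat a b c).map (dmap del)
      + (Umat * Rmat a b c - Rmat a b c * Umat) = 0 ∧
  (Rmat a b c).det = 0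

/-- A_j, the ξ^{−j−1}-coefficient of a(ξ). -/
def coA (a : NLSL) (j : ℕ) : NLSE := a.coeff (j + 1 : ℤ)

/-- The NLS derivations D_j: derivations of 𝒜[ε,ε⁻¹] commuting with ∂, annihilating ε,
with D_j(q) = 2^{j+1} ε⁻¹ B_{j+1} and D_j(r) = 2^{j+1} ε⁻¹ C_{j+1}. -/
def IsNLSD (del : Derivation ℂ NLSE NLSE) (b c : NLSL)
    (D : ℕ → Derivation ℂ NLSE NLSE) : Prop :=
  (∀ j x, D j (del x) = del (D j x)) ∧
  (∀ j, D j eps = 0) ∧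
  (∀ j, D j (qv 0) = (2 : NLSE) ^ (j + 1) * epsInv * coA b (j + 1)) ∧
  (∀ j, D j (rv 0) = (2 : NLSE) ^ (j + 1) * epsInv * coA c (j + 1))

end

noncomputable section

/-!
Write `R = diag(2, 0) + ξ⁻¹ [[a, b], [c, -a]]` with `a, b, c` power series in `ξ⁻¹`. The
off-diagonal entries of the Lax equation together with `det R = 0` say exactly that `(a, b, c)`
is a fixed point of a map which raises the `ξ⁻¹`-adic order of differences by one, and such a map
has exactly one fixed point, built coefficient by coefficient. The diagonal entries of the Lax
equation follow by applying `∂` to `det R = 0`, because `1 + ξ⁻¹ a` is a unit. The coefficients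
lie in `𝒜[ε]` since the recursion only involves `ε`, `q`, `r`, `1/2` and `∂`.
-/

open PowerSeries

namespace Derivation

variable {R S : Type*} [CommRing R] [CommRing S] [Algebra R S]

def powerSeriesMapCoeffs (d : Derivation R S S) : Derivation R S⟦X⟧ S⟦X⟧ where
  toFun f := PowerSeries.mk fun n => d (coeff n f)
  map_add' f g := by ext; simp
  map_smul' c f := by ext; simp
  map_one_eq_zero' := by ext n; simp [coeff_one, apply_ite d]
  leibniz' f g := by
    ext n
    simp only [LinearMap.coe_mk, AddHom.coe_mk, coeff_mk, smul_eq_mul, map_add, coeff_mul,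
      map_sum, Derivation.leibniz, Finset.sum_add_distrib]
    rw [← Finset.Nat.sum_antidiagonal_swap (f := fun p => coeff p.1 g * d (coeff p.2 f))]
    simp [mul_comm]

@[simp]
theorem coeff_powerSeriesMapCoeffs (d : Derivation R S S) (f : S⟦X⟧) (n : ℕ) :
    coeff n (d.powerSeriesMapCoeffs f) = d (coeff n f) :=
  coeff_mk n (fun n => d (coeff n f))

theorem powerSeriesMapCoeffs_X (d : Derivation R S S) : d.powerSeriesMapCoeffs X = 0 := by
  ext n
  simp [coeff_X, apply_ite d]

theorem map_mem_adjoin {A : Type*} [CommRing A] [Algebra R A] (D : Derivation R A A)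
    {s : Set A} (hs : ∀ x ∈ s, D x ∈ Algebra.adjoin R s) {x : A}
    (hx : x ∈ Algebra.adjoin R s) : D x ∈ Algebra.adjoin R s := by
  induction hx using Algebra.adjoin_induction with
  | mem x hx => exact hs x hx
  | algebraMap c => simp
  | add x y _ _ hx hy => simpa using add_mem hx hy
  | mul x y hx' hy' hx hy => simpa using add_mem (mul_mem hx' hy) (mul_mem hy' hx)

end Derivation

namespace Subring

variable {S : Type*} [CommRing S]

def powerSeries (T : Subring S) : Subring S⟦X⟧ := (PowerSeries.map T.subtype).range

theorem mem_powerSeries {T : Subring S} {f : S⟦X⟧} :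
    f ∈ T.powerSeries ↔ ∀ n, coeff n f ∈ T := by
  constructor
  · rintro ⟨g, rfl⟩ n
    simp
  · intro h
    exact ⟨PowerSeries.mk fun n => ⟨coeff n f, h n⟩, by ext; simp⟩

theorem C_mem_powerSeries {T : Subring S} {x : S} (hx : x ∈ T) : C x ∈ T.powerSeries :=
  mem_powerSeries.2 fun n => by rw [coeff_C]; split_ifs <;> simp [hx]

theorem X_mem_powerSeries (T : Subring S) : X ∈ T.powerSeries :=
  mem_powerSeries.2 fun n => by rw [coeff_X]; split_ifs <;> simp

end Subring

namespace PowerSeries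

section Contraction

variable {S ι : Type*} [CommRing S]

theorem coeff_eq_of_X_pow_succ_dvd_sub {f g : S⟦X⟧} {n : ℕ} (h : X ^ (n + 1) ∣ f - g) :
    coeff n f = coeff n g :=
  sub_eq_zero.1 <| by simpa using X_pow_dvd_iff.1 h n (Nat.lt_succ_self n)

theorem eq_of_forall_X_pow_dvd_sub {f g : S⟦X⟧} (h : ∀ n, X ^ n ∣ f - g) : f = g :=
  ext fun n => coeff_eq_of_X_pow_succ_dvd_sub (h (n + 1))

def IsXAdicContraction (Φ : (ι → S⟦X⟧) → ι → S⟦X⟧) : Prop :=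
  ∀ n u v, (∀ i, X ^ n ∣ u i - v i) → ∀ i, X ^ (n + 1) ∣ Φ u i - Φ v i

def fixCoeff (Φ : (ι → S⟦X⟧) → ι → S⟦X⟧) (n : ℕ) (i : ι) : S :=
  coeff n (Φ (fun j => mk fun m => if _ : m < n then fixCoeff Φ m j else 0) i)
termination_by n

def xAdicFix (Φ : (ι → S⟦X⟧) → ι → S⟦X⟧) (i : ι) : S⟦X⟧ :=
  mk fun n => fixCoeff Φ n i

theorem IsXAdicContraction.eq_of_isFixedPt {Φ : (ι → S⟦X⟧) → ι → S⟦X⟧}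
    (hΦ : IsXAdicContraction Φ) {u v : ι → S⟦X⟧} (hu : Φ u = u) (hv : Φ v = v) : u = v := by
  have h : ∀ n i, X ^ n ∣ u i - v i := by
    intro n
    induction n with
    | zero => simp
    | succ n ih => simpa [hu, hv] using hΦ n u v ih
  exact funext fun i => eq_of_forall_X_pow_dvd_sub (h · i)

theorem IsXAdicContraction.xAdicFix_isFixedPt {Φ : (ι → S⟦X⟧) → ι → S⟦X⟧}
    (hΦ : IsXAdicContraction Φ) : Φ (xAdicFix Φ) = xAdicFix Φ := by
  funext i
  ext n
  rw [xAdicFix, coeff_mk, fixCoeff]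
  refine coeff_eq_of_X_pow_succ_dvd_sub (hΦ n _ _ (fun j => X_pow_dvd_iff.2 fun m hm => ?_) i)
  simp [xAdicFix, hm]

theorem xAdicFix_mem_powerSeries {Φ : (ι → S⟦X⟧) → ι → S⟦X⟧} {T : Subring S}
    (hΦT : ∀ u, (∀ i, u i ∈ T.powerSeries) → ∀ i, Φ u i ∈ T.powerSeries) (i : ι) :
    xAdicFix Φ i ∈ T.powerSeries := by
  refine Subring.mem_powerSeries.2 fun n => ?_
  induction n using Nat.strong_induction_on generalizing i with
  | _ n ih =>
    rw [xAdicFix, coeff_mk, fixCoeff]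
    refine Subring.mem_powerSeries.1 (hΦT _ (fun j => Subring.mem_powerSeries.2 fun m => ?_) i) n
    rw [coeff_mk]
    split_ifs with hm
    · simpa [xAdicFix] using ih m hm j
    · exact zero_mem T

end Contraction

section Resolvent

variable {R S : Type*} [CommRing R] [CommRing S] [Algebra R S] [Invertible (2 : S)]

def resolventMap (D : Derivation R S⟦X⟧ S⟦X⟧) (e q r : S) (u : Fin 3 → S⟦X⟧) :
    Fin 3 → S⟦X⟧ :=
  ![-(C ⅟2 * X * (u 0 ^ 2 + u 1 * u 2)),
    C q * (1 + X * u 0) + C ⅟2 * C e * X * D (u 1),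
    -(C r * (1 + X * u 0)) - C ⅟2 * C e * X * D (u 2)]

/-- For `u = (a, b, c)` and `R = diag(2, 0) + X [[a, b], [c, -a]]` with `X = ξ⁻¹`: the equation
`det R = 0` divided by `-X`, and the off-diagonal entries of `e D R = [R, U]`, where
`U = [[-ξ, -q], [r, ξ]]`. -/
def IsResolventSeries (D : Derivation R S⟦X⟧ S⟦X⟧) (e q r : S) (u : Fin 3 → S⟦X⟧) : Prop :=
  2 * u 0 + X * (u 0 ^ 2 + u 1 * u 2) = 0 ∧
  C e * X * D (u 1) = 2 * u 1 - 2 * C q * (1 + X * u 0) ∧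
  C e * X * D (u 2) = -(2 * u 2) - 2 * C r * (1 + X * u 0)

theorem C_invOf_two_mul_two : (C ⅟2 : S⟦X⟧) * 2 = 1 := by
  rw [← map_ofNat C 2, ← map_mul, invOf_mul_self, map_one]

theorem resolventMap_eq_self_iff (D : Derivation R S⟦X⟧ S⟦X⟧) (e q r : S) (u : Fin 3 → S⟦X⟧) :
    resolventMap D e q r u = u ↔ IsResolventSeries D e q r u := by
  have h2 := C_invOf_two_mul_two (S := S)
  simp only [funext_iff, Fin.forall_fin_succ, IsEmpty.forall_iff, and_true, resolventMap,
    IsResolventSeries, Matrix.cons_val_zero, Matrix.cons_val_succ, Fin.succ_zero_eq_one,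
    Fin.succ_one_eq_two]
  constructor
  · rintro ⟨ha, hb, hc⟩
    refine ⟨?_, ?_, ?_⟩
    · linear_combination -2 * ha - (X * (u 0 ^ 2 + u 1 * u 2)) * h2
    · linear_combination 2 * hb - (C e * X * D (u 1)) * h2
    · linear_combination -2 * hc - (C e * X * D (u 2)) * h2
  · rintro ⟨ha, hb, hc⟩
    refine ⟨?_, ?_, ?_⟩
    · linear_combination -C ⅟2 * ha + u 0 * h2
    · linear_combination C ⅟2 * hb + (u 1 - C q * (1 + X * u 0)) * h2
    · linear_combination -C ⅟2 * hc + (u 2 + C r * (1 + X * u 0)) * h2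

theorem isXAdicContraction_resolventMap {D : Derivation R S⟦X⟧ S⟦X⟧} (hDX : D X = 0)
    (e q r : S) : IsXAdicContraction (resolventMap D e q r) := by
  intro n u v h i
  have hD : ∀ j, X ^ n ∣ D (u j) - D (v j) := fun j => by
    obtain ⟨g, hg⟩ := h j
    rw [← map_sub, hg, Derivation.leibniz, Derivation.leibniz_pow, hDX]
    simp
  have h0 : X ^ (n + 1) ∣ resolventMap D e q r u 0 - resolventMap D e q r v 0 := by
    have : resolventMap D e q r u 0 - resolventMap D e q r v 0 = X * (-C ⅟2 *
        ((u 0 - v 0) * (u 0 + v 0) + (u 1 - v 1) * u 2 + v 1 * (u 2 - v 2))) := by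
      simp [resolventMap]; ring
    rw [this, pow_succ']
    exact mul_dvd_mul_left X <| Dvd.dvd.mul_left
      (dvd_add (dvd_add ((h 0).mul_right _) ((h 1).mul_right _)) ((h 2).mul_left _)) _
  have h1 : X ^ (n + 1) ∣ resolventMap D e q r u 1 - resolventMap D e q r v 1 := by
    have : resolventMap D e q r u 1 - resolventMap D e q r v 1 =
        X * (C q * (u 0 - v 0) + C ⅟2 * C e * (D (u 1) - D (v 1))) := by
      simp [resolventMap]; ring
    rw [this, pow_succ']
    exact mul_dvd_mul_left X (dvd_add ((h 0).mul_left _) ((hD 1).mul_left _))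
  have h2 : X ^ (n + 1) ∣ resolventMap D e q r u 2 - resolventMap D e q r v 2 := by
    have : resolventMap D e q r u 2 - resolventMap D e q r v 2 =
        X * (-(C r * (u 0 - v 0)) - C ⅟2 * C e * (D (u 2) - D (v 2))) := by
      simp [resolventMap]; ring
    rw [this, pow_succ']
    exact mul_dvd_mul_left X (dvd_sub ((h 0).mul_left _).neg_right ((hD 2).mul_left _))
  fin_cases i
  exacts [h0, h1, h2]

theorem IsResolventSeries.diagonal {D : Derivation R S⟦X⟧ S⟦X⟧} (hDX : D X = 0) {e q r : S}
    {u : Fin 3 → S⟦X⟧} (h : IsResolventSeries D e q r u) :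
    C e * D (u 0) = C q * u 2 + C r * u 1 := by
  obtain ⟨hdet, hb, hc⟩ := h
  have hD2 : D 2 = 0 := by exact_mod_cast D.map_natCast 2
  have hdet' := congrArg D hdet
  simp only [map_add, Derivation.leibniz, Derivation.leibniz_pow, hDX, hD2, smul_eq_mul,
    map_zero] at hdet'
  have key : X * (2 * (1 + X * u 0) * (C e * D (u 0) - (C q * u 2 + C r * u 1))) = X * 0 := by
    linear_combination (C e * X) * hdet' - X * u 2 * hb - X * u 1 * hc
  have hunit : IsUnit (2 * (1 + X * u 0) : S⟦X⟧) := by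
    refine IsUnit.mul ?_ (isUnit_iff_constantCoeff.2 (by simp))
    rw [← map_ofNat C 2]
    exact (isUnit_of_invertible (2 : S)).map C
  exact sub_eq_zero.1 (hunit.mul_right_eq_zero.1 (X_mul_cancel key))

theorem resolventMap_mem_powerSeries {D : Derivation R S⟦X⟧ S⟦X⟧} {T : Subring S}
    (hD : ∀ f ∈ T.powerSeries, D f ∈ T.powerSeries) (h2 : ⅟2 ∈ T) {e q r : S} (he : e ∈ T)
    (hq : q ∈ T) (hr : r ∈ T) {u : Fin 3 → S⟦X⟧} (hu : ∀ i, u i ∈ T.powerSeries) (i : Fin 3) :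
    resolventMap D e q r u i ∈ T.powerSeries := by
  have hX := T.X_mem_powerSeries
  have h2e := mul_mem (Subring.C_mem_powerSeries h2) (Subring.C_mem_powerSeries he)
  have hα : 1 + X * u 0 ∈ T.powerSeries := add_mem (one_mem _) (mul_mem hX (hu 0))
  fin_cases i
  · exact neg_mem (mul_mem (mul_mem (Subring.C_mem_powerSeries h2) hX)
      (add_mem (pow_mem (hu 0) 2) (mul_mem (hu 1) (hu 2))))
  · exact add_mem (mul_mem (Subring.C_mem_powerSeries hq) hα)
      (mul_mem (mul_mem h2e hX) (hD _ (hu 1)))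
  · exact sub_mem (neg_mem (mul_mem (Subring.C_mem_powerSeries hr) hα))
      (mul_mem (mul_mem h2e hX) (hD _ (hu 2)))

end Resolvent

end PowerSeries

theorem HahnSeries.coeff_ofPowerSeries_X_mul_of_nonpos {S : Type*} [CommRing S] (f : S⟦X⟧)
    {n : ℤ} (hn : n ≤ 0) : (ofPowerSeries ℤ S (X * f)).coeff n = 0 := by
  rw [PowerSeries.coeff_coe]
  split_ifs
  · rfl
  · obtain rfl : n = 0 := by omega
    simp

theorem HahnSeries.eq_ofPowerSeries_X_mul {S : Type*} [CommRing S] {f : LaurentSeries S}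
    (hf : ∀ n : ℤ, n ≤ 0 → f.coeff n = 0) :
    f = ofPowerSeries ℤ S (X * PowerSeries.mk fun k => f.coeff (k + 1)) := by
  ext n
  rw [PowerSeries.coeff_coe]
  split_ifs with hn
  · exact hf n hn.le
  · obtain ⟨k, rfl⟩ := Int.eq_ofNat_of_zero_le (not_lt.1 hn)
    cases k with
    | zero => simpa using hf 0 le_rfl
    | succ k => rw [Int.natAbs_natCast, coeff_succ_X_mul, coeff_mk]; push_cast; rfl

instance : Invertible (2 : NLSE) where
  invOf := algebraMap ℂ NLSE 2⁻¹
  invOf_mul_self := by rw [← map_ofNat (algebraMap ℂ NLSE) 2, ← map_mul]; norm_num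
  mul_invOf_self := by rw [← map_ofNat (algebraMap ℂ NLSE) 2, ← map_mul]; norm_num

/-- `𝒜[ε]`, as the subring generated over `ℂ` by `ε` and the `qᵢ, rᵢ`. -/
def aeSubring : Subring NLSE :=
  (Algebra.adjoin ℂ (insert eps (Set.range qv ∪ Set.range rv))).toSubring

theorem eps_mem_aeSubring : eps ∈ aeSubring := Algebra.subset_adjoin (Or.inl rfl)

theorem qv_mem_aeSubring (i : ℕ) : qv i ∈ aeSubring :=
  Algebra.subset_adjoin (Or.inr (Or.inl ⟨i, rfl⟩))

theorem rv_mem_aeSubring (i : ℕ) : rv i ∈ aeSubring :=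
  Algebra.subset_adjoin (Or.inr (Or.inr ⟨i, rfl⟩))

theorem invOf_two_mem_aeSubring : ⅟(2 : NLSE) ∈ aeSubring :=
  Subalgebra.algebraMap_mem _ _

theorem IsDel.map_mem_aeSubring {del : Derivation ℂ NLSE NLSE} (hdel : IsDel del) {x : NLSE}
    (hx : x ∈ aeSubring) : del x ∈ aeSubring := by
  refine del.map_mem_adjoin (fun y hy => ?_) hx
  rcases hy with rfl | ⟨i, rfl⟩ | ⟨i, rfl⟩
  · rw [hdel.2.2]; exact zero_mem aeSubring
  · rw [hdel.1 i]; exact qv_mem_aeSubring (i + 1)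
  · rw [hdel.2.1 i]; exact rv_mem_aeSubring (i + 1)

theorem IsDel.powerSeriesMapCoeffs_mem {del : Derivation ℂ NLSE NLSE} (hdel : IsDel del)
    {f : NLSE⟦X⟧} (hf : f ∈ aeSubring.powerSeries) :
    del.powerSeriesMapCoeffs f ∈ aeSubring.powerSeries :=
  Subring.mem_powerSeries.2 fun n => by
    simpa using hdel.map_mem_aeSubring (Subring.mem_powerSeries.1 hf n)

theorem inAE_toLaurent (p : Polynomial NLSA) : inAE (Polynomial.toLaurent p) := by
  intro n hn
  refine Finsupp.notMem_support_iff.1 fun hmem => ?_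
  rw [LaurentPolynomial.support_coeff_toLaurent] at hmem
  obtain ⟨k, -, rfl⟩ := Finset.mem_map.1 hmem
  exact absurd hn (by simp)

theorem inAE_of_mem_aeSubring {x : NLSE} (hx : x ∈ aeSubring) : inAE x := by
  have : Algebra.adjoin ℂ (insert eps (Set.range qv ∪ Set.range rv)) ≤
      ((Polynomial.toLaurentAlg (R := NLSA)).restrictScalars ℂ).range := by
    rw [Algebra.adjoin_le_iff]
    rintro _ (rfl | ⟨i, rfl⟩ | ⟨i, rfl⟩)
    · exact ⟨Polynomial.X, Polynomial.toLaurent_X⟩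
    · exact ⟨Polynomial.C _, Polynomial.toLaurent_C _⟩
    · exact ⟨Polynomial.C _, Polynomial.toLaurent_C _⟩
  obtain ⟨p, rfl⟩ := this hx
  exact inAE_toLaurent p

theorem xiL_mul_ofPowerSeries_X : xiL * HahnSeries.ofPowerSeries ℤ NLSE X = 1 := by
  rw [HahnSeries.ofPowerSeries_X, xiL, HahnSeries.single_mul_single]
  simp

theorem dmap_ofPowerSeries (del : Derivation ℂ NLSE NLSE) (f : NLSE⟦X⟧) :
    dmap del (HahnSeries.ofPowerSeries ℤ NLSE f) =
      HahnSeries.ofPowerSeries ℤ NLSE (del.powerSeriesMapCoeffs f) := by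
  ext n
  simp only [dmap, coeffMap, PowerSeries.coeff_coe, ZeroHom.coe_mk]
  split_ifs <;> simp

theorem CL_eq_ofPowerSeries_C (x : NLSE) : CL x = HahnSeries.ofPowerSeries ℤ NLSE (C x) :=
  (HahnSeries.ofPowerSeries_C x).symm

/-- `diag(2, 0) + ξ⁻¹ [[a, b], [c, -a]]` for `u = (a, b, c)`; `X` stands for `ξ⁻¹`. -/
def resolventMatrix (u : Fin 3 → NLSE⟦X⟧) : Matrix (Fin 2) (Fin 2) NLSL :=
  (!![2 + X * u 0, X * u 1; X * u 2, -(X * u 0)]).map (HahnSeries.ofPowerSeries ℤ NLSE)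

theorem lax_resolventMatrix (del : Derivation ℂ NLSE NLSE) (u : Fin 3 → NLSE⟦X⟧) :
    CL eps • (resolventMatrix u).map (dmap del)
        + (Umat * resolventMatrix u - resolventMatrix u * Umat) =
      (!![X * (C eps * del.powerSeriesMapCoeffs (u 0) - (C (qv 0) * u 2 + C (rv 0) * u 1)),
          C eps * X * del.powerSeriesMapCoeffs (u 1) - (2 * u 1 - 2 * C (qv 0) * (1 + X * u 0));
          C eps * X * del.powerSeriesMapCoeffs (u 2) -
            (-(2 * u 2) - 2 * C (rv 0) * (1 + X * u 0)),
          -(X * (C eps * del.powerSeriesMapCoeffs (u 0) - (C (qv 0) * u 2 + C (rv 0) * u 1)))]).map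
        (HahnSeries.ofPowerSeries ℤ NLSE) := by
  have h := xiL_mul_ofPowerSeries_X
  have hD2 : del.powerSeriesMapCoeffs (2 : NLSE⟦X⟧) = 0 := by
    exact_mod_cast del.powerSeriesMapCoeffs.map_natCast 2
  refine Matrix.ext fun i j => ?_
  fin_cases i <;> fin_cases j <;>
    simp only [resolventMatrix, Umat, Matrix.add_apply, Matrix.smul_apply, Matrix.sub_apply,
      Matrix.mul_apply, Fin.sum_univ_two, Matrix.map_apply, Matrix.of_apply, Matrix.cons_val',
      Matrix.cons_val_zero, Matrix.cons_val_one, Matrix.empty_val', Matrix.cons_val_fin_one,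
      Fin.zero_eta, Fin.mk_one, Fin.isValue, smul_eq_mul, dmap_ofPowerSeries,
      CL_eq_ofPowerSeries_C] <;>
    simp only [map_add, map_sub, map_neg, map_mul, map_ofNat, map_one, Derivation.leibniz,
      Derivation.powerSeriesMapCoeffs_X, hD2, smul_eq_mul, mul_zero, add_zero, zero_add]
  · ring
  · linear_combination -2 * HahnSeries.ofPowerSeries ℤ NLSE (u 1) * h
  · linear_combination 2 * HahnSeries.ofPowerSeries ℤ NLSE (u 2) * h
  · ring

theorem det_resolventMatrix (u : Fin 3 → NLSE⟦X⟧) :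
    (resolventMatrix u).det =
      HahnSeries.ofPowerSeries ℤ NLSE (-(X * (2 * u 0 + X * (u 0 ^ 2 + u 1 * u 2)))) := by
  simp [resolventMatrix, Matrix.det_fin_two]
  ring

theorem lax_eq_zero_and_det_eq_zero_iff (del : Derivation ℂ NLSE NLSE) (u : Fin 3 → NLSE⟦X⟧) :
    (CL eps • (resolventMatrix u).map (dmap del)
        + (Umat * resolventMatrix u - resolventMatrix u * Umat) = 0 ∧
      (resolventMatrix u).det = 0) ↔
    IsResolventSeries del.powerSeriesMapCoeffs eps (qv 0) (rv 0) u := by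
  have hinj : Function.Injective (HahnSeries.ofPowerSeries ℤ NLSE) :=
    HahnSeries.ofPowerSeries_injective
  rw [lax_resolventMatrix, det_resolventMatrix, map_eq_zero_iff _ hinj, neg_eq_zero,
    ← Matrix.map_zero _ (map_zero (HahnSeries.ofPowerSeries ℤ NLSE)),
    (Matrix.map_injective hinj).eq_iff]
  constructor
  · rintro ⟨hM, hdet⟩
    have hb := congrFun (congrFun hM 0) 1
    have hc := congrFun (congrFun hM 1) 0
    simp only [Matrix.of_apply, Matrix.cons_val', Matrix.cons_val_zero, Matrix.cons_val_one,
      Matrix.empty_val', Matrix.cons_val_fin_one, Matrix.zero_apply, sub_eq_zero] at hb hc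
    exact ⟨X_mul_cancel (hdet.trans (mul_zero X).symm), hb, hc⟩
  · intro h
    have hdiag := h.diagonal del.powerSeriesMapCoeffs_X
    obtain ⟨hdet, hb, hc⟩ := h
    refine ⟨Matrix.ext fun i j => ?_, by rw [hdet, mul_zero]⟩
    fin_cases i <;> fin_cases j <;> simp [hdiag, hb, hc]

theorem coeff_resolventMatrix_of_neg (u : Fin 3 → NLSE⟦X⟧) (i j : Fin 2) {n : ℤ} (hn : n < 0) :
    (resolventMatrix u i j).coeff n = 0 := by
  rw [resolventMatrix, Matrix.map_apply, PowerSeries.coeff_coe, if_pos hn]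

theorem coeff_resolventMatrix_sub_of_nonpos (u : Fin 3 → NLSE⟦X⟧) (i j : Fin 2) {n : ℤ}
    (hn : n ≤ 0) : ((resolventMatrix u - !![(2 : NLSL), 0; 0, 0]) i j).coeff n = 0 := by
  have h : resolventMatrix u - !![(2 : NLSL), 0; 0, 0] =
      (!![X * u 0, X * u 1; X * u 2, X * -u 0]).map (HahnSeries.ofPowerSeries ℤ NLSE) :=
    Matrix.ext fun i j => by fin_cases i <;> fin_cases j <;> simp [resolventMatrix, map_ofNat]
  rw [h, Matrix.map_apply]
  fin_cases i <;> fin_cases j <;> exact HahnSeries.coeff_ofPowerSeries_X_mul_of_nonpos _ hn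

theorem trace_resolventMatrix (u : Fin 3 → NLSE⟦X⟧) : (resolventMatrix u).trace = 2 := by
  simp [resolventMatrix, Matrix.trace_fin_two, map_ofNat]

theorem inAE_coeff_resolventMatrix {u : Fin 3 → NLSE⟦X⟧} (hu : ∀ i, u i ∈ aeSubring.powerSeries)
    (i j : Fin 2) (n : ℤ) : inAE ((resolventMatrix u i j).coeff n) := by
  have hX := aeSubring.X_mem_powerSeries
  have hM : ∀ i j, (!![2 + X * u 0, X * u 1; X * u 2, -(X * u 0)] : Matrix _ _ NLSE⟦X⟧) i j ∈
      aeSubring.powerSeries := by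
    intro i j
    fin_cases i <;> fin_cases j
    · exact add_mem (ofNat_mem _ 2) (mul_mem hX (hu 0))
    · exact mul_mem hX (hu 1)
    · exact mul_mem hX (hu 2)
    · exact neg_mem (mul_mem hX (hu 0))
  rw [resolventMatrix, Matrix.map_apply, PowerSeries.coeff_coe]
  split_ifs
  · exact fun _ _ => rfl
  · exact inAE_of_mem_aeSubring (Subring.mem_powerSeries.1 (hM i j) _)

theorem exists_eq_resolventMatrix {R : Matrix (Fin 2) (Fin 2) NLSL}
    (hR : ∀ i j : Fin 2, ∀ n : ℤ, n ≤ 0 → ((R - !![(2 : NLSL), 0; 0, 0]) i j).coeff n = 0)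
    (htr : R.trace = 2) : ∃ u, R = resolventMatrix u := by
  obtain ⟨g, hg⟩ : ∃ g : Fin 2 → Fin 2 → NLSE⟦X⟧, ∀ i j,
      (R - !![(2 : NLSL), 0; 0, 0]) i j = HahnSeries.ofPowerSeries ℤ NLSE (X * g i j) :=
    ⟨_, fun i j => HahnSeries.eq_ofPowerSeries_X_mul (hR i j)⟩
  refine ⟨![g 0 0, g 0 1, g 1 0], Matrix.ext fun i j => ?_⟩
  have h00 := hg 0 0
  have h01 := hg 0 1
  have h10 := hg 1 0
  simp at h00 h01 h10
  rw [Matrix.trace_fin_two] at htr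
  fin_cases i <;> fin_cases j <;> simp [resolventMatrix, map_ofNat]
  · linear_combination h00
  · exact h01
  · exact h10
  · linear_combination htr - h00

/-- Lemma 1.1: existence and uniqueness of the basic matrix resolvent. -/
theorem nls_basic_matrix_resolvent_exists_unique
    (del : Derivation ℂ NLSE NLSE) (hdel : IsDel del) :
    ∃! R : Matrix (Fin 2) (Fin 2) NLSL,
      -- entries of R lie in 𝒜[ε][[ξ⁻¹]]
      (∀ i j : Fin 2, ∀ n : ℤ, n < 0 → (R i j).coeff n = 0) ∧
      (∀ i j : Fin 2, ∀ n : ℤ, inAE ((R i j).coeff n)) ∧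
      -- (i): R − diag(2,0) has entries in ξ⁻¹·𝒜[ε][[ξ⁻¹]]
      (∀ i j : Fin 2, ∀ n : ℤ, n ≤ 0 →
        ((R - !![(2 : NLSL), 0; 0, 0]) i j).coeff n = 0) ∧
      -- (ii): ε∂(R(ξ)) + [U(ξ), R(ξ)] = 0
      (CL eps • R.map (dmap del) + (Umat * R - R * Umat) = 0) ∧
      -- (iii): tr R(ξ) = 2
      (R.trace = 2) ∧
      -- (iv): det R(ξ) = 0
      (R.det = 0) := by
  set Φ := resolventMap del.powerSeriesMapCoeffs eps (qv 0) (rv 0)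
  have hΦ : IsXAdicContraction Φ := isXAdicContraction_resolventMap del.powerSeriesMapCoeffs_X _ _ _
  have hfix : IsResolventSeries del.powerSeriesMapCoeffs eps (qv 0) (rv 0) (xAdicFix Φ) :=
    (resolventMap_eq_self_iff _ _ _ _ _).1 hΦ.xAdicFix_isFixedPt
  have hmem : ∀ i, xAdicFix Φ i ∈ aeSubring.powerSeries :=
    xAdicFix_mem_powerSeries fun _ => resolventMap_mem_powerSeries
      (fun _ => hdel.powerSeriesMapCoeffs_mem) invOf_two_mem_aeSubring eps_mem_aeSubring
      (qv_mem_aeSubring 0) (rv_mem_aeSubring 0)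
  obtain ⟨hlax, hdet⟩ := (lax_eq_zero_and_det_eq_zero_iff del _).2 hfix
  refine ⟨resolventMatrix (xAdicFix Φ), ⟨fun i j _ => coeff_resolventMatrix_of_neg _ i j,
    inAE_coeff_resolventMatrix hmem, fun i j _ => coeff_resolventMatrix_sub_of_nonpos _ i j, hlax,
    trace_resolventMatrix _, hdet⟩, ?_⟩
  rintro R ⟨-, -, hR, hlaxR, htr, hdetR⟩
  obtain ⟨u, rfl⟩ := exists_eq_resolventMatrix hR htr
  have hu := (lax_eq_zero_and_det_eq_zero_iff del u).1 ⟨hlaxR, hdetR⟩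
  rw [hΦ.eq_of_isFixedPt ((resolventMap_eq_self_iff _ _ _ _ _).2 hu) hΦ.xAdicFix_isFixedPt]

end
end

section
/- For each j ≥ 0, setting V_j(ξ) = (ξ^{j+1}·R(ξ))₊ (the polynomial part in ξ), the NLS derivation D_j satisfies D_j(U(ξ)) = 2^j ε⁻¹·([V_j(ξ), U(ξ)] − ε∂(V_j(ξ))) (D_j acts entrywise, with D_j(ξ) = 0); equivalently, D_j(ℒ(ξ)) = 2^j ε⁻¹ [V_j(ξ), ℒ(ξ)] for the operator ℒ(ξ) = ε∂ + U(ξ). -/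
set_option synthInstance.maxHeartbeats 1000000
set_option maxHeartbeats 1000000

noncomputable section

/-- Polynomial part in ξ of a Laurent series: keep the exponents n ≤ 0 of ξ⁻¹. -/
def polyPart (x : NLSL) : NLSL where
  coeff n := if n ≤ 0 then x.coeff n else 0
  isPWO_support' := x.isPWO_support'.mono (by
    intro n hn
    simp only [Function.mem_support, ne_eq] at hn ⊢
    intro h
    apply hn
    rw [h]
    simp)

/-- V_j(ξ) = (ξ^{j+1} R(ξ))₊, the polynomial part in ξ. -/
def Vmat (a b c : NLSL) (j : ℕ) : Matrix (Fin 2) (Fin 2) NLSL :=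
  Matrix.of fun i l =>
    polyPart (HahnSeries.single (-(j + 1) : ℤ) (1 : NLSE) * Rmat a b c i l)

end

/-!
Multiplying the resolvent equation `ε∂R + [U, R] = 0` by `ξ^{j+1}` and taking polynomial parts
gives `ε∂V_j + [U, V_j] = -([U, W])₊` for the tail `W = (ξ^{j+1} R)₋`. Since `U = ξσ + Q` with
`σ = diag(-1, 1)` is linear in `ξ`, only the `ξ⁻¹`-coefficient `R_{j+1}` of `W` contributes, so
`[V_j, U] - ε∂V_j = [σ, R_{j+1}]`. Its off-diagonal entries are `-2B_{j+1}` and `2C_{j+1}`, which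
by the definition of `D_j` are `2^{-j} ε` times the entries of `D_j(U)`.
-/

lemma polyPart_coeff (x : NLSL) (n : ℤ) :
    (polyPart x).coeff n = if n ≤ 0 then x.coeff n else 0 := rfl

lemma dmap_coeff (d : Derivation ℂ NLSE NLSE) (x : NLSL) (n : ℤ) :
    (dmap d x).coeff n = d (x.coeff n) := rfl

lemma CL_mul_coeff (x : NLSE) (y : NLSL) (n : ℤ) : (CL x * y).coeff n = x * y.coeff n :=
  HahnSeries.coeff_single_zero_mul

lemma CL_coeff (x : NLSE) (n : ℤ) : (CL x).coeff n = if n = 0 then x else 0 := by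
  rw [CL, HahnSeries.C_apply, HahnSeries.coeff_single]
  split <;> rfl

lemma xiL_mul_coeff (x : NLSL) (n : ℤ) : (xiL * x).coeff n = x.coeff (n + 1) := by
  simpa [xiL] using
    HahnSeries.coeff_single_mul_add (r := (1 : NLSE)) (x := x) (a := n + 1) (b := -1)

lemma single_one_mul_coeff (k : ℤ) (x : NLSL) (n : ℤ) :
    (HahnSeries.single k (1 : NLSE) * x).coeff n = x.coeff (n - k) := by
  simpa using HahnSeries.coeff_single_mul_add (r := (1 : NLSE)) (x := x) (a := n - k) (b := k)

lemma polyPart_add (x y : NLSL) : polyPart (x + y) = polyPart x + polyPart y := by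
  ext n
  simp only [polyPart_coeff, HahnSeries.coeff_add]
  split_ifs <;> simp

noncomputable def polyPartHom : NLSL →+ NLSL := AddMonoidHom.mk' polyPart polyPart_add

lemma polyPart_sub (x y : NLSL) : polyPart (x - y) = polyPart x - polyPart y :=
  map_sub polyPartHom x y

lemma polyPart_CL_mul (y : NLSE) (x : NLSL) : polyPart (CL y * x) = CL y * polyPart x := by
  ext n
  simp only [polyPart_coeff, CL_mul_coeff]
  split_ifs <;> simp

lemma polyPart_xiL_mul (x : NLSL) :
    polyPart (xiL * x) = xiL * polyPart x + CL (x.coeff 1) := by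
  ext n
  simp only [polyPart_coeff, xiL_mul_coeff, HahnSeries.coeff_add, CL_coeff]
  split_ifs <;> first | omega | simp_all

lemma polyPart_dmap (d : Derivation ℂ NLSE NLSE) (x : NLSL) :
    polyPart (dmap d x) = dmap d (polyPart x) := by
  ext n
  simp only [polyPart_coeff, dmap_coeff]
  split_ifs <;> simp

lemma dmap_single_one_mul (d : Derivation ℂ NLSE NLSE) (k : ℤ) (x : NLSL) :
    dmap d (HahnSeries.single k 1 * x) = HahnSeries.single k 1 * dmap d x := by
  ext n
  rw [dmap_coeff, single_one_mul_coeff, single_one_mul_coeff, dmap_coeff]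

lemma dmap_CL (d : Derivation ℂ NLSE NLSE) (x : NLSE) : dmap d (CL x) = CL (d x) := by
  ext n
  simp only [dmap_coeff, CL_coeff]
  split_ifs <;> simp

lemma dmap_neg (d : Derivation ℂ NLSE NLSE) (x : NLSL) : dmap d (-x) = -dmap d x := by
  ext n
  simp [dmap_coeff]

lemma dmap_xiL (d : Derivation ℂ NLSE NLSE) : dmap d xiL = 0 := by
  ext n
  simp only [dmap_coeff, xiL, HahnSeries.coeff_single, HahnSeries.coeff_zero]
  split_ifs <;> simp

section LinearMatrix

variable {ι κ μ : Type*}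

noncomputable def linearMat (S T : Matrix ι κ NLSE) : Matrix ι κ NLSL :=
  xiL • S.map CL + T.map CL

lemma linearMat_apply (S T : Matrix ι κ NLSE) (i : ι) (k : κ) :
    linearMat S T i k = xiL * CL (S i k) + CL (T i k) := rfl

lemma polyPart_linear_mul (s t : NLSE) (x : NLSL) :
    polyPart ((xiL * CL s + CL t) * x) =
      (xiL * CL s + CL t) * polyPart x + CL (s * x.coeff 1) := by
  rw [add_mul, polyPart_add, mul_assoc, polyPart_xiL_mul, polyPart_CL_mul, polyPart_CL_mul,
    CL_mul_coeff]
  ring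

lemma polyPart_mul_linear (x : NLSL) (s t : NLSE) :
    polyPart (x * (xiL * CL s + CL t)) =
      polyPart x * (xiL * CL s + CL t) + CL (x.coeff 1 * s) := by
  rw [mul_comm, polyPart_linear_mul, mul_comm, mul_comm s]

variable [Fintype κ]

lemma map_polyPart_linearMat_mul (S T : Matrix ι κ NLSE) (X : Matrix κ μ NLSL) :
    (linearMat S T * X).map polyPart =
      linearMat S T * X.map polyPart + (S * X.map (HahnSeries.coeff · 1)).map CL := by
  refine Matrix.ext fun i l => ?_
  simp only [Matrix.map_apply, Matrix.mul_apply, Matrix.add_apply, linearMat_apply]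
  change polyPartHom _ = _
  rw [map_sum, CL, map_sum, ← Finset.sum_add_distrib]
  exact Finset.sum_congr rfl fun k _ => polyPart_linear_mul _ _ _

lemma map_polyPart_mul_linearMat (X : Matrix ι κ NLSL) (S T : Matrix κ μ NLSE) :
    (X * linearMat S T).map polyPart =
      X.map polyPart * linearMat S T + (X.map (HahnSeries.coeff · 1) * S).map CL := by
  refine Matrix.ext fun i l => ?_
  simp only [Matrix.map_apply, Matrix.mul_apply, Matrix.add_apply, linearMat_apply]
  change polyPartHom _ = _
  rw [map_sum, CL, map_sum, ← Finset.sum_add_distrib]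
  exact Finset.sum_congr rfl fun k _ => polyPart_mul_linear _ _ _

end LinearMatrix

section Lax

variable {ι : Type*} [Fintype ι] (d : Derivation ℂ NLSE NLSE) (e : NLSE)

lemma lax_smul {M W : Matrix ι ι NLSL} {s : NLSL} (hs : ∀ x, dmap d (s * x) = s * dmap d x)
    (h : CL e • W.map (dmap d) + (M * W - W * M) = 0) :
    CL e • (s • W).map (dmap d) + (M * (s • W) - (s • W) * M) = 0 := by
  have hmap : (s • W).map (dmap d) = s • W.map (dmap d) := Matrix.ext fun i l => hs (W i l)
  rw [hmap, Matrix.mul_smul, Matrix.smul_mul, smul_comm (CL e), ← smul_sub, ← smul_add, h,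
    smul_zero]

lemma map_polyPart_of_lax {S T : Matrix ι ι NLSE} {W : Matrix ι ι NLSL}
    (h : CL e • W.map (dmap d) + (linearMat S T * W - W * linearMat S T) = 0) :
    W.map polyPart * linearMat S T - linearMat S T * W.map polyPart
        - CL e • (W.map polyPart).map (dmap d) =
      (S * W.map (HahnSeries.coeff · 1) - W.map (HahnSeries.coeff · 1) * S).map CL := by
  have hP := congrArg (Matrix.map · polyPart) h
  rw [Matrix.map_add _ polyPart_add, Matrix.map_sub _ polyPart_sub,
    map_polyPart_linearMat_mul, map_polyPart_mul_linearMat,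
    Matrix.map_smul _ _ fun x => polyPart_CL_mul e x, Matrix.map_map,
    show polyPart ∘ dmap d = dmap d ∘ polyPart from funext (polyPart_dmap d),
    ← Matrix.map_map, Matrix.map_zero polyPart (map_zero polyPartHom)] at hP
  rw [Matrix.map_sub CL fun x y => map_sub HahnSeries.C x y, ← sub_eq_zero, ← neg_eq_zero,
    ← hP]
  abel

end Lax

lemma Matrix.diag_neg_one_one_commutator {R : Type*} [Ring R] (X : Matrix (Fin 2) (Fin 2) R) :
    !![-1, 0; 0, 1] * X - X * !![-1, 0; 0, 1] = !![0, -2 * X 0 1; 2 * X 1 0, 0] := by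
  ext i k
  fin_cases i <;> fin_cases k <;>
    simp [Matrix.mul_apply, Fin.sum_univ_two, -Matrix.cons_mul] <;> noncomm_ring

lemma Umat_eq_linearMat : Umat = linearMat !![-1, 0; 0, 1] !![0, -qv 0; rv 0, 0] := by
  ext i k : 2
  fin_cases i <;> fin_cases k <;> simp [Umat, linearMat_apply, CL]

lemma Umat_map_dmap (d : Derivation ℂ NLSE NLSE) :
    Umat.map (dmap d) = !![0, -CL (d (qv 0)); CL (d (rv 0)), 0] := by
  ext i k : 2
  fin_cases i <;> fin_cases k <;> simp [Umat, dmap_xiL, dmap_neg, dmap_CL]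

noncomputable section

theorem nls_derivations_lax_form_general
    (del : Derivation ℂ NLSE NLSE)
    (a b c : NLSL) (hR : IsMR del a b c)
    (D : ℕ → Derivation ℂ NLSE NLSE) (hD : IsNLSD del b c D) :
    ∀ j : ℕ,
      Umat.map (dmap (D j)) =
        CL ((2 : NLSE) ^ j * epsInv) •
          ((Vmat a b c j * Umat - Umat * Vmat a b c j)
            - CL eps • (Vmat a b c j).map (dmap del)) := by
  intro j
  obtain ⟨-, -, -, -, -, -, hlax, -⟩ := hR
  obtain ⟨-, -, hq, hr⟩ := hD
  have hV : Vmat a b c j =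
      (HahnSeries.single (-(j + 1) : ℤ) (1 : NLSE) • Rmat a b c).map polyPart := rfl
  rw [Umat_eq_linearMat] at hlax
  have hW := map_polyPart_of_lax del eps
    (lax_smul del eps (dmap_single_one_mul del (-(j + 1))) hlax)
  rw [Umat_map_dmap, Umat_eq_linearMat, hV, hW, Matrix.diag_neg_one_one_commutator, hq, hr]
  ext i k : 2
  fin_cases i <;> fin_cases k <;> simp [Rmat, coA, CL, single_one_mul_coeff] <;> ring_nf

/-- the Lax form of the NLS derivations,
D_j(U(ξ)) = 2^j ε⁻¹ ([V_j(ξ), U(ξ)] − ε∂(V_j(ξ))). -/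
theorem nls_derivations_lax_form
    (del : Derivation ℂ NLSE NLSE) (hdel : IsDel del)
    (a b c : NLSL) (hR : IsMR del a b c)
    (D : ℕ → Derivation ℂ NLSE NLSE) (hD : IsNLSD del b c D) :
    ∀ j : ℕ,
      Umat.map (dmap (D j)) =
        CL ((2 : NLSE) ^ j * epsInv) •
          ((Vmat a b c j * Umat - Umat * Vmat a b c j)
            - CL eps • (Vmat a b c j).map (dmap del)) :=
  nls_derivations_lax_form_general del a b c hR D hD

end
end

section
/- Define X*, Y*, Z* ∈ 𝒜[ε][[ξ⁻¹,ν⁻¹]] as follows: X* is the unique solution of (ν−ξ)·X* = b(ν)c(ξ) − b(ξ)c(ν); Y* = −2ν⁻¹·b(ξ) + Y₁ where Y₁ is the unique solution of (ν−ξ)·Y₁ = 2(1+a(ν))b(ξ) − 2(1+a(ξ))b(ν); and Z* = 2ν⁻¹·c(ξ) + Z₁ where Z₁ is the unique solution of (ν−ξ)·Z₁ = 2(1+a(ξ))c(ν) − 2(1+a(ν))c(ξ) (each right-hand side is divisible by ν−ξ, being antisymmetric under exchanging ξ and ν). Then W(ξ,ν) := ε⁻¹·[[X*, Y*],[Z*,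 −X*]] satisfies ε∂(W(ξ,ν)) + [U(ξ), W(ξ,ν)] + [∇(ν)(U(ξ)), R(ξ)] = 0, where ∇(ν)(U(ξ)) = [[0, −∇(ν)(q)],[∇(ν)(r), 0]], as well as 2X* + 2a(ξ)X* + c(ξ)Y* + b(ξ)Z* = 0. -/
set_option synthInstance.maxHeartbeats 1000000
set_option maxHeartbeats 1000000

noncomputable section

/-- The two-variable Laurent-series ring 𝒜[ε,ε⁻¹][[ξ⁻¹,ν⁻¹]][ξ,ν]; the outer
Hahn-series exponent records the power of ν⁻¹, the inner one the power of ξ⁻¹. -/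
abbrev NLSL2 : Type := HahnSeries ℤ NLSL

instance : CommRing NLSL2 := inferInstance
instance : Algebra ℂ NLSL2 := inferInstance

/-- Embedding of series in ξ (constant in ν). -/
def toXi (x : NLSL) : NLSL2 := HahnSeries.C x

/-- A series in ξ re-read as the corresponding series in ν. -/
def toNu (x : NLSL) : NLSL2 :=
  coeffMap ⟨fun e => (HahnSeries.C e : NLSL), map_zero _⟩ x

/-- ν. -/
def nuL : NLSL2 := HahnSeries.single (-1 : ℤ) 1

/-- ν⁻¹. -/
def nuInv : NLSL2 := HahnSeries.single (1 : ℤ) 1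

/-- ξ, in the two-variable ring. -/
def xiL2 : NLSL2 := toXi xiL

/-- ε, in the two-variable ring. -/
def epsL2 : NLSL2 := toXi (CL eps)

lemma dmap_zero (d : Derivation ℂ NLSE NLSE) : dmap d 0 = 0 := by
  ext n
  simp [dmap, coeffMap]

/-- ∂ applied to all 𝒜[ε,ε⁻¹]-coefficients of a two-variable series. -/
def dmap2 (d : Derivation ℂ NLSE NLSE) : NLSL2 → NLSL2 :=
  coeffMap ⟨dmap d, dmap_zero d⟩

/-- The loop operator ∇(ν) = Σ_{j≥0} 2^{−j} ν^{−j−2} D_j, applied to a series in ξ. -/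
def nabla (D : ℕ → Derivation ℂ NLSE NLSE) (x : NLSL) : NLSL2 :=
  HahnSeries.single (2 : ℤ) (1 : NLSL) *
    HahnSeries.ofPowerSeries ℤ NLSL
      (PowerSeries.mk fun j => ((2 : ℂ) ^ j)⁻¹ • dmap (D j) x)

end
noncomputable section

/-- U(ξ), in the two-variable ring. -/
def UXi : Matrix (Fin 2) (Fin 2) NLSL2 := Umat.map toXi

/-- ∇(ν)(U(ξ)) = [[0, −∇(ν)(q)],[∇(ν)(r), 0]]. -/
def nablaU (D : ℕ → Derivation ℂ NLSE NLSE) : Matrix (Fin 2) (Fin 2) NLSL2 :=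
  !![0, -(nabla D (CL (qv 0))); nabla D (CL (rv 0)), 0]

/-- R(ξ), in the two-variable ring. -/
def RXi' (a b c : NLSL) : Matrix (Fin 2) (Fin 2) NLSL2 := (Rmat a b c).map toXi

/-- Membership in 𝒜[ε][[ξ⁻¹,ν⁻¹]]. -/
def memAE2 (w : NLSL2) : Prop :=
  (∀ m : ℤ, m < 0 → w.coeff m = 0) ∧
  (∀ m n : ℤ, n < 0 → (w.coeff m).coeff n = 0) ∧
  (∀ m n : ℤ, inAE ((w.coeff m).coeff n))

/-!
Multiply the identity by `ε`. Since `B₀ = q` and `C₀ = -r`, the loop operator acts on the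
potentials through the resolvent itself: `ε ∇(ν) q = 2 (b(ν) - q ν⁻¹)` and
`ε ∇(ν) r = 2 (c(ν) + r ν⁻¹)`. After multiplication by `ν - ξ`, each entry of the resulting
matrix identity is a polynomial consequence of the relations defining `X*, Y*, Z*`, of their
`∂`-derivatives, and of the resolvent equation `ε ∂R + [U, R] = 0` taken at `ξ` and at `ν`; as
the ring of double Laurent series has no zero divisors, `ν - ξ` cancels. The scalar identity
follows from the defining relations alone in the same way.
-/

namespace HahnSeries

variable {Γ : Type*} [PartialOrder Γ] {R S : Type*}

def mapAddMonoidHom [AddMonoid R] [AddMonoid S] (f : R →+ S) : R⟦Γ⟧ →+ S⟦Γ⟧ where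
  toFun x := x.map f
  map_zero' := HahnSeries.map_zero f.toZeroHom
  map_add' _ _ := HahnSeries.map_add f

lemma map_single_of_eq_zero [Zero R] [Zero S] {F : Type*} [FunLike F R S] [ZeroHomClass F R S]
    {f : F} {a : Γ} {r : R} (h : f r = 0) : (single a r).map f = 0 := by
  ext g
  rw [map_coeff, coeff_single, coeff_zero]
  split_ifs <;> simp [h]

variable [AddCommMonoid Γ] [IsOrderedCancelAddMonoid Γ]

def mapRingHom [Semiring R] [Semiring S] (f : R →+* S) : R⟦Γ⟧ →+* S⟦Γ⟧ where
  toFun x := x.map f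
  map_one' := HahnSeries.map_one f.toMonoidWithZeroHom
  map_mul' _ _ := HahnSeries.map_mul f.toNonUnitalRingHom
  map_zero' := HahnSeries.map_zero f.toAddMonoidHom.toZeroHom
  map_add' _ _ := HahnSeries.map_add f.toAddMonoidHom

lemma map_C_of_zeroHomClass [Semiring R] [Semiring S] {F : Type*} [FunLike F R S]
    [ZeroHomClass F R S] (f : F) (a : R) : (C a : R⟦Γ⟧).map f = C (f a) := by
  ext g
  rw [map_coeff, C_apply, C_apply, coeff_single, coeff_single]
  split_ifs <;> simp

lemma map_mul_of_leibniz [CommRing R] (f : R →+ R) (hf : ∀ a b, f (a * b) = a * f b + b * f a)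
    (x y : R⟦Γ⟧) : (x * y).map f = x * y.map f + y * x.map f := by
  ext g
  have hx : (x.map f).support ⊆ x.support := support_map_subset x f.toZeroHom
  have hy : (y.map f).support ⊆ y.support := support_map_subset y f.toZeroHom
  rw [coeff_add, mul_comm y, coeff_mul_right' y.isPWO_support hy,
    coeff_mul_left' x.isPWO_support hx, map_coeff, coeff_mul, map_sum, ← Finset.sum_add_distrib]
  refine Finset.sum_congr rfl fun ij _ => ?_
  rw [hf, map_coeff, map_coeff, mul_comm (y.coeff _)]

end HahnSeries

lemma inv_two_pow_smul_two_pow_succ_mul {K A : Type*} [Field K] [NeZero (2 : K)] [Semiring A]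
    [Algebra K A] (j : ℕ) (y : A) : ((2 : K) ^ j)⁻¹ • ((2 : A) ^ (j + 1) * y) = 2 * y := by
  have h : ((2 : K) ^ j)⁻¹ * 2 ^ (j + 1) = 2 := by
    rw [pow_succ, ← mul_assoc, inv_mul_cancel₀ (pow_ne_zero _ two_ne_zero), one_mul]
  rw [← smul_mul_assoc, ← map_ofNat (algebraMap K A), ← map_pow, Algebra.smul_def, ← map_mul, h]

lemma isUnit_two_of_algebra {K A : Type*} [Field K] [NeZero (2 : K)] [Semiring A]
    [Algebra K A] : IsUnit (2 : A) := by
  simpa only [map_ofNat] using (IsUnit.mk0 (2 : K) two_ne_zero).map (algebraMap K A)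

section LaxEquation

variable {S : Type*} [CommRing S]

/-- The entries `(0,1)`, `(1,0)` and `(0,0)` of `ε ∂R + [U, R] = 0` for
`U = [[-ξ, -q], [r, ξ]]` and `R = [[2 + a, b], [c, -a]]`; the entry `(1,1)` is minus `(0,0)`. -/
structure ResolventEq (δ : S → S) (ε q r ξ a b c : S) : Prop where
  deriv_b : ε * δ b = 2 * (ξ * b) - 2 * (q * (1 + a))
  deriv_c : ε * δ c = -(2 * (ξ * c)) - 2 * (r * (1 + a))
  deriv_a : ε * δ a = q * c + r * b

lemma ResolventEq.map {T : Type*} [CommRing T] {δ : S → S} {δ' : T → T}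
    {ε q r ξ a b c : S} (h : ResolventEq δ ε q r ξ a b c) (φ : S →+* T)
    (hφ : ∀ x, δ' (φ x) = φ (δ x)) :
    ResolventEq δ' (φ ε) (φ q) (φ r) (φ ξ) (φ a) (φ b) (φ c) where
  deriv_b := by simpa [hφ, map_ofNat] using congrArg φ h.deriv_b
  deriv_c := by simpa [hφ, map_ofNat] using congrArg φ h.deriv_c
  deriv_a := by simpa [hφ] using congrArg φ h.deriv_a

/-- The left-hand side is `tr (R M)` for `R = [[2 + a, b], [c, -a]]` and
`M = [[X, -2wb + Y], [2wc + Z, -X]]`. -/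
theorem trace_resolvent_mul_eq_zero [NoZeroDivisors S] {ξ ν w a b c a' b' c' X Y Z : S}
    (hνξ : ν - ξ ≠ 0)
    (hX : (ν - ξ) * X = b' * c - b * c')
    (hY : (ν - ξ) * Y = 2 * (1 + a') * b - 2 * (1 + a) * b')
    (hZ : (ν - ξ) * Z = 2 * (1 + a) * c' - 2 * (1 + a') * c) :
    2 * X + 2 * a * X + c * (-(2 * (w * b)) + Y) + b * (2 * (w * c) + Z) = 0 := by
  refine (mul_eq_zero.mp ?_).resolve_left hνξ
  linear_combination (2 + 2 * a) * hX + c * hY + b * hZ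

-- Derivations are taken as additive maps with the Leibniz rule: on Laurent series, instance search
-- finds the `ℂ`-algebra structure coming from power series, which is not definitionally the
-- coefficientwise one that a coefficientwise `Derivation ℂ` would be built on.
variable (δ : S →+ S) (hδ : ∀ x y, δ (x * y) = x * δ y + y * δ x)
include hδ

lemma map_one_of_leibniz : δ 1 = 0 := by
  simpa using hδ 1 1

lemma map_two_of_leibniz : δ 2 = 0 := by
  rw [← one_add_one_eq_two, map_add, map_one_of_leibniz δ hδ, add_zero]

lemma lax_eq_rescale {n : Type*} [Fintype n] {ε E : S} (hE : ε * E = 1) (hδE : δ E = 0)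
    {U M N P : Matrix n n S}
    (h : ε • M.map δ + (U * M - M * U) + ((ε • N) * P - P * (ε • N)) = 0) :
    ε • (E • M).map δ + (U * (E • M) - (E • M) * U) + (N * P - P * N) = 0 := by
  have hmap : (E • M).map δ = E • M.map δ := by
    ext i j
    simp [hδ, hδE]
  have hN : N = E • ε • N := by rw [smul_smul, mul_comm, hE, one_smul]
  rw [hmap, hN, ← smul_zero E, ← h]
  simp only [smul_add, smul_sub, Matrix.mul_smul, Matrix.smul_mul, smul_smul, mul_comm ε E]

/-- The terms in `w` cancel on their own, so `w` (which will be `ν⁻¹`) may be any constant. -/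
theorem lax_eq_of_resolventEq [NoZeroDivisors S] {ε q r ξ ν w a b c a' b' c' X Y Z : S}
    (hξ : δ ξ = 0) (hν : δ ν = 0) (hw : δ w = 0) (hνξ : ν - ξ ≠ 0)
    (hR : ResolventEq δ ε q r ξ a b c) (hR' : ResolventEq δ ε q r ν a' b' c')
    (hX : (ν - ξ) * X = b' * c - b * c')
    (hY : (ν - ξ) * Y = 2 * (1 + a') * b - 2 * (1 + a) * b')
    (hZ : (ν - ξ) * Z = 2 * (1 + a) * c' - 2 * (1 + a') * c) :
    ε • (!![X, -(2 * (w * b)) + Y; 2 * (w * c) + Z, -X]).map δ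
      + (!![-ξ, -q; r, ξ] * !![X, -(2 * (w * b)) + Y; 2 * (w * c) + Z, -X]
        - !![X, -(2 * (w * b)) + Y; 2 * (w * c) + Z, -X] * !![-ξ, -q; r, ξ])
      + (!![0, -(2 * (b' - q * w)); 2 * (c' + r * w), 0] * !![2 + a, b; c, -a]
        - !![2 + a, b; c, -a] * !![0, -(2 * (b' - q * w)); 2 * (c' + r * w), 0]) = 0 := by
  have h1 := map_one_of_leibniz δ hδ
  have h2 := map_two_of_leibniz δ hδ
  have hdiff : ∀ {s t : S}, (ν - ξ) * s = t → (ν - ξ) * (ε * δ s) = ε * δ t := fun h => by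
    rw [← h, hδ, map_sub, hν, hξ]
    ring
  have dX := hdiff hX
  have dY := hdiff hY
  have dZ := hdiff hZ
  simp only [hδ, map_sub, map_add, h1, h2] at dX dY dZ
  obtain ⟨db, dc, da⟩ := hR
  obtain ⟨db', dc', da'⟩ := hR'
  ext i j
  fin_cases i <;> fin_cases j <;>
    simp only [Matrix.add_apply, Matrix.sub_apply, Matrix.smul_apply, Matrix.map_apply,
      Matrix.mul_apply, Fin.sum_univ_two, Matrix.of_apply, Matrix.cons_val', Matrix.cons_val_zero,
      Matrix.cons_val_one, Matrix.cons_val_fin_one, Matrix.zero_apply, Fin.mk_zero,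
      Fin.mk_one, Fin.isValue, smul_eq_mul, map_add, map_neg, hδ, hw, h2] <;>
    refine (mul_eq_zero.mp ?_).resolve_left hνξ
  · linear_combination dX + c * db' + b' * dc - c' * db - b * dc' - q * hZ - r * hY
  · linear_combination dY - 2 * w * (ν - ξ) * db + 2 * b * da' + 2 * (1 + a') * db
      - 2 * b' * da - 2 * (1 + a) * db' - 2 * ξ * hY + 2 * q * hX
  · linear_combination dZ + 2 * w * (ν - ξ) * dc + 2 * c' * da + 2 * (1 + a) * dc'
      - 2 * c * da' - 2 * (1 + a') * dc + 2 * ξ * hZ + 2 * r * hX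
  · linear_combination -(dX + c * db' + b' * dc - c' * db - b * dc' - q * hZ - r * hY)

end LaxEquation

open HahnSeries

section Derivatives

variable (del : Derivation ℂ NLSE NLSE)

def dmapHom : NLSL →+ NLSL := mapAddMonoidHom del.toAddMonoidHom

def dmap2Hom : NLSL2 →+ NLSL2 := mapAddMonoidHom (dmapHom del)

lemma coe_dmapHom : ⇑(dmapHom del) = dmap del := rfl

lemma coeff_dmapHom (x : NLSL) (n : ℤ) : (dmapHom del x).coeff n = del (x.coeff n) := rfl

lemma dmapHom_mul (x y : NLSL) : dmapHom del (x * y) = x * dmapHom del y + y * dmapHom del x :=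
  map_mul_of_leibniz _ (fun a b => by simp [Derivation.leibniz]) x y

lemma dmap2Hom_mul (x y : NLSL2) :
    dmap2Hom del (x * y) = x * dmap2Hom del y + y * dmap2Hom del x :=
  map_mul_of_leibniz _ (dmapHom_mul del) x y

lemma dmapHom_CL (e : NLSE) : dmapHom del (CL e) = CL (del e) :=
  map_C_of_zeroHomClass _ e

lemma dmapHom_xiL : dmapHom del xiL = 0 :=
  map_single_of_eq_zero (f := del.toAddMonoidHom) del.map_one_eq_zero

lemma dmap2Hom_toXi (x : NLSL) : dmap2Hom del (toXi x) = toXi (dmapHom del x) :=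
  map_C_of_zeroHomClass _ x

lemma dmap2Hom_toNu (x : NLSL) : dmap2Hom del (toNu x) = toNu (dmapHom del x) :=
  HahnSeries.ext (funext fun n => map_C_of_zeroHomClass del (x.coeff n))

lemma dmap2Hom_nuL : dmap2Hom del nuL = 0 :=
  map_single_of_eq_zero (map_one_of_leibniz _ (dmapHom_mul del))

lemma dmap2Hom_nuInv : dmap2Hom del nuInv = 0 :=
  map_single_of_eq_zero (map_one_of_leibniz _ (dmapHom_mul del))

lemma dmap2Hom_xiL2 : dmap2Hom del xiL2 = 0 := by
  rw [xiL2, dmap2Hom_toXi, dmapHom_xiL, toXi, map_zero]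

lemma eps_mul_epsInv : eps * epsInv = 1 := by
  rw [eps, epsInv, ← LaurentPolynomial.T_add, add_neg_cancel, LaurentPolynomial.T_zero]

lemma epsL2_mul_epsInv : epsL2 * toXi (CL epsInv) = 1 := by
  rw [epsL2, toXi, toXi, CL, CL, ← map_mul, ← map_mul, eps_mul_epsInv, map_one, map_one]

lemma dmap2Hom_epsInv (hdel : IsDel del) : dmap2Hom del (toXi (CL epsInv)) = 0 := by
  have h : del epsInv = 0 := by
    rw [del.leibniz_of_mul_eq_one (mul_comm eps epsInv ▸ eps_mul_epsInv), hdel.2.2, smul_zero]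
  rw [dmap2Hom_toXi, dmapHom_CL, h, CL, map_zero, toXi, map_zero]

end Derivatives

lemma nuL_sub_xiL2_ne_zero : nuL - xiL2 ≠ 0 := by
  intro h
  have h1 : (nuL - xiL2).coeff (-1) = 0 := by rw [h]; rfl
  rw [coeff_sub, nuL, coeff_single_same, xiL2, toXi, C_apply,
    coeff_single_of_ne (by norm_num), sub_zero] at h1
  exact one_ne_zero h1

lemma coeff_xiL_mul (y : NLSL) (n : ℤ) : (xiL * y).coeff n = y.coeff (n + 1) := by
  rw [xiL, ← add_neg_cancel_right n 1, coeff_single_mul_add, one_mul, add_neg_cancel_right]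

lemma coeff_CL_mul (e : NLSE) (y : NLSL) (n : ℤ) : (CL e * y).coeff n = e * y.coeff n := by
  rw [CL, C_apply, coeff_single_zero_mul]

lemma coeff_toXi_mul (z : NLSL) (y : NLSL2) (n : ℤ) : (toXi z * y).coeff n = z * y.coeff n := by
  rw [toXi, C_apply, coeff_single_zero_mul]

lemma toXi_mul_nuInv (z : NLSL) : toXi z * nuInv = single 1 z := by
  rw [toXi, nuInv, C_apply, single_mul_single, zero_add, mul_one]

lemma smul_CL (z : ℂ) (e : NLSE) : z • CL e = CL (z • e) := by
  ext n
  rw [coeff_smul, CL, CL, C_apply, C_apply, coeff_single, coeff_single]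
  split_ifs <;> simp

lemma toNu_CL (e : NLSE) : toNu (CL e) = toXi (CL e) :=
  HahnSeries.map_C e C

lemma toNu_xiL : toNu xiL = nuL := by
  refine HahnSeries.ext (funext fun n => ?_)
  show C (xiL.coeff n) = nuL.coeff n
  rw [xiL, nuL, coeff_single, coeff_single]
  split_ifs <;> simp

lemma mapRingHom_C_apply (x : NLSL) : mapRingHom C x = toNu x := rfl

lemma UXi_eq : UXi = !![-xiL2, -toXi (CL (qv 0)); toXi (CL (rv 0)), xiL2] := by
  ext i j : 1
  fin_cases i <;> fin_cases j <;> simp [UXi, Umat, xiL2, toXi]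

lemma RXi'_eq (a b c : NLSL) : RXi' a b c = !![2 + toXi a, toXi b; toXi c, -toXi a] := by
  ext i j : 1
  fin_cases i <;> fin_cases j <;> simp [RXi', Rmat, toXi, -C_apply, map_ofNat]

section Resolvent

variable {del : Derivation ℂ NLSE NLSE} {a b c : NLSL}

lemma IsMR.resolventEq (hR : IsMR del a b c) :
    ResolventEq (dmapHom del) (CL eps) (CL (qv 0)) (CL (rv 0)) xiL a b c := by
  obtain ⟨-, -, -, -, -, -, hres, -⟩ := hR
  have entry : ∀ i j, (CL eps • (Rmat a b c).map (dmap del)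
      + (Umat * Rmat a b c - Rmat a b c * Umat)) i j = 0 := by
    rw [hres]
    exact fun _ _ => rfl
  have h2 : dmapHom del 2 = 0 := map_two_of_leibniz _ (dmapHom_mul del)
  have e00 := entry 0 0
  have e01 := entry 0 1
  have e10 := entry 1 0
  simp only [Rmat, Umat, ← coe_dmapHom, Matrix.add_apply, Matrix.sub_apply, Matrix.smul_apply,
    Matrix.map_apply, Matrix.mul_apply, Fin.sum_univ_two, Matrix.of_apply, Matrix.cons_val',
    Matrix.cons_val_zero, Matrix.cons_val_one, Matrix.cons_val_fin_one, smul_eq_mul, map_add, h2]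
    at e00 e01 e10
  exact ⟨by linear_combination e01, by linear_combination e10, by linear_combination e00⟩

lemma IsMR.b_coeff_one (hR : IsMR del a b c) : b.coeff 1 = qv 0 := by
  have h := congrArg (coeff · 0) hR.resolventEq.deriv_b
  simp only [coeff_CL_mul, coeff_dmapHom, coeff_sub, two_mul, coeff_add, coeff_xiL_mul, coeff_one,
    hR.1 0 le_rfl, hR.2.1 0 le_rfl, map_zero, if_pos, zero_add, mul_zero] at h
  exact (isUnit_two_of_algebra (K := ℂ)).mul_left_cancel (by linear_combination -h)

lemma IsMR.c_coeff_one (hR : IsMR del a b c) : c.coeff 1 = -rv 0 := by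
  have h := congrArg (coeff · 0) hR.resolventEq.deriv_c
  simp only [coeff_CL_mul, coeff_dmapHom, coeff_sub, coeff_neg, two_mul, coeff_add, coeff_xiL_mul,
    coeff_one, hR.1 0 le_rfl, hR.2.2.1 0 le_rfl, map_zero, if_pos, zero_add, mul_zero] at h
  exact (isUnit_two_of_algebra (K := ℂ)).mul_left_cancel (by linear_combination h)

end Resolvent

section Loop

variable (D : ℕ → Derivation ℂ NLSE NLSE)

lemma nabla_coeff_of_lt_two (x : NLSL) {m : ℤ} (hm : m < 2) : (nabla D x).coeff m = 0 := by
  rw [nabla, ← sub_add_cancel m 2, coeff_single_mul_add, one_mul, ofPowerSeries_apply]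
  refine embDomain_of_notMem_range fun ⟨n, hn⟩ => ?_
  have : (n : ℤ) = m - 2 := hn
  omega

lemma nabla_coeff_natCast_add_two (x : NLSL) (j : ℕ) :
    (nabla D x).coeff (j + 2) = ((2 : ℂ) ^ j)⁻¹ • dmap (D j) x := by
  rw [nabla, coeff_single_mul_add, one_mul, ofPowerSeries_apply_coeff, PowerSeries.coeff_mk]

/-- `ε ∇(ν) x = 2 Σ_j s_{j+2} ν^{-j-2}`, which is `2 (s(ν) - s₁ ν⁻¹)` because `s` has no terms
of order `≤ 0`. -/
lemma epsL2_mul_nabla (x : NLSE) (s : NLSL) (hs : ∀ n ≤ 0, s.coeff n = 0)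
    (hD : ∀ j, D j x = 2 ^ (j + 1) * epsInv * coA s (j + 1)) :
    epsL2 * nabla D (CL x) = 2 * (toNu s - toXi (CL (s.coeff 1)) * nuInv) := by
  refine HahnSeries.ext (funext fun m => ?_)
  rw [two_mul, coeff_add, ← two_mul, coeff_sub, toXi_mul_nuInv, coeff_single, epsL2,
    coeff_toXi_mul]
  show _ = 2 * (CL (s.coeff m) - _)
  rcases lt_or_ge m 2 with hm | hm
  · rw [nabla_coeff_of_lt_two D _ hm, mul_zero]
    split_ifs with h1
    · rw [h1, sub_self, mul_zero]
    · rw [hs m (by omega), sub_zero, CL, map_zero, mul_zero]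
  · obtain ⟨j, rfl⟩ : ∃ j : ℕ, m = j + 2 := ⟨(m - 2).toNat, by omega⟩
    rw [if_neg (by omega), sub_zero, nabla_coeff_natCast_add_two, ← coe_dmapHom, dmapHom_CL, hD,
      smul_CL, mul_assoc, inv_two_pow_smul_two_pow_succ_mul, coA]
    have hidx : ((j + 1 : ℕ) : ℤ) + 1 = j + 2 := by push_cast; ring
    rw [hidx, CL, CL, CL, ← map_mul, ← map_ofNat (C : NLSE →+* NLSL) 2, ← map_mul]
    congr 1
    linear_combination (2 * s.coeff (j + 2)) * eps_mul_epsInv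

variable {del : Derivation ℂ NLSE NLSE} {a b c : NLSL} {D}

lemma epsL2_smul_nablaU (hR : IsMR del a b c) (hD : IsNLSD del b c D) :
    epsL2 • nablaU D = !![0, -(2 * (toNu b - toXi (CL (qv 0)) * nuInv));
      2 * (toNu c + toXi (CL (rv 0)) * nuInv), 0] := by
  obtain ⟨-, -, hDq, hDr⟩ := hD
  have hq := epsL2_mul_nabla D _ b hR.2.1 hDq
  have hr := epsL2_mul_nabla D _ c hR.2.2.1 hDr
  have hneg : toXi (CL (-rv 0)) = -toXi (CL (rv 0)) := by
    rw [CL, CL, toXi, toXi, map_neg, map_neg]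
  rw [hR.b_coeff_one] at hq
  rw [hR.c_coeff_one, hneg, neg_mul, sub_neg_eq_add] at hr
  ext i j : 1
  fin_cases i <;> fin_cases j <;> simp [nablaU, hq, hr]

end Loop

theorem nls_explicit_W_solves_general
    (del : Derivation ℂ NLSE NLSE) (hdel : IsDel del)
    (a b c : NLSL) (hR : IsMR del a b c)
    (D : ℕ → Derivation ℂ NLSE NLSE) (hD : IsNLSD del b c D)
    (Xs Y1 Z1 : NLSL2)
    (hX : (nuL - xiL2) * Xs = toNu b * toXi c - toXi b * toNu c)
    (hY : (nuL - xiL2) * Y1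
        = 2 * (1 + toNu a) * toXi b - 2 * (1 + toXi a) * toNu b)
    (hZ : (nuL - xiL2) * Z1
        = 2 * (1 + toXi a) * toNu c - 2 * (1 + toNu a) * toXi c) :
    (epsL2 • (toXi (CL epsInv) • !![Xs, -(2 * (nuInv * toXi b)) + Y1;
          2 * (nuInv * toXi c) + Z1, -Xs]).map (dmap2 del)
        + (UXi * (toXi (CL epsInv) • !![Xs, -(2 * (nuInv * toXi b)) + Y1;
            2 * (nuInv * toXi c) + Z1, -Xs])
          - (toXi (CL epsInv) • !![Xs, -(2 * (nuInv * toXi b)) + Y1;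
            2 * (nuInv * toXi c) + Z1, -Xs]) * UXi)
        + (nablaU D * RXi' a b c - RXi' a b c * nablaU D) = 0) ∧
    (2 * Xs + 2 * toXi a * Xs + toXi c * (-(2 * (nuInv * toXi b)) + Y1)
        + toXi b * (2 * (nuInv * toXi c) + Z1) = 0) := by
  have hRξ : ResolventEq (dmap2Hom del) epsL2 (toXi (CL (qv 0))) (toXi (CL (rv 0))) xiL2
      (toXi a) (toXi b) (toXi c) :=
    hR.resolventEq.map (C : NLSL →+* NLSL2) (dmap2Hom_toXi del)
  have hRν : ResolventEq (dmap2Hom del) epsL2 (toXi (CL (qv 0))) (toXi (CL (rv 0))) nuL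
      (toNu a) (toNu b) (toNu c) := by
    simpa only [mapRingHom_C_apply, toNu_CL, toNu_xiL, epsL2] using
      hR.resolventEq.map (mapRingHom (C : NLSE →+* NLSL)) (dmap2Hom_toNu del)
  refine ⟨lax_eq_rescale (dmap2Hom del) (dmap2Hom_mul del) epsL2_mul_epsInv
    (dmap2Hom_epsInv del hdel) ?_, trace_resolvent_mul_eq_zero nuL_sub_xiL2_ne_zero hX hY hZ⟩
  rw [epsL2_smul_nablaU hR hD, UXi_eq, RXi'_eq]
  exact lax_eq_of_resolventEq _ (dmap2Hom_mul del) (dmap2Hom_xiL2 del) (dmap2Hom_nuL del)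
    (dmap2Hom_nuInv del) nuL_sub_xiL2_ne_zero hRξ hRν hX hY hZ

/-- the explicit solution (X*, Y*, Z*) of the equations of Lemma 2.1. -/
theorem nls_explicit_W_solves
    (del : Derivation ℂ NLSE NLSE) (hdel : IsDel del)
    (a b c : NLSL) (hR : IsMR del a b c)
    (D : ℕ → Derivation ℂ NLSE NLSE) (hD : IsNLSD del b c D)
    (Xs Y1 Z1 : NLSL2)
    (hXmem : memAE2 Xs) (hYmem : memAE2 Y1) (hZmem : memAE2 Z1)
    (hX : (nuL - xiL2) * Xs = toNu b * toXi c - toXi b * toNu c)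
    (hY : (nuL - xiL2) * Y1
        = 2 * (1 + toNu a) * toXi b - 2 * (1 + toXi a) * toNu b)
    (hZ : (nuL - xiL2) * Z1
        = 2 * (1 + toXi a) * toNu c - 2 * (1 + toNu a) * toXi c) :
    (epsL2 • (toXi (CL epsInv) • !![Xs, -(2 * (nuInv * toXi b)) + Y1;
          2 * (nuInv * toXi c) + Z1, -Xs]).map (dmap2 del)
        + (UXi * (toXi (CL epsInv) • !![Xs, -(2 * (nuInv * toXi b)) + Y1;
            2 * (nuInv * toXi c) + Z1, -Xs])
          - (toXi (CL epsInv) • !![Xs, -(2 * (nuInv * toXi b)) + Y1;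
            2 * (nuInv * toXi c) + Z1, -Xs]) * UXi)
        + (nablaU D * RXi' a b c - RXi' a b c * nablaU D) = 0) ∧
    (2 * Xs + 2 * toXi a * Xs + toXi c * (-(2 * (nuInv * toXi b)) + Y1)
        + toXi b * (2 * (nuInv * toXi c) + Z1) = 0) :=
  nls_explicit_W_solves_general del hdel a b c hR D hD Xs Y1 Z1 hX hY hZ

end
end

section
/- With λ = 2ξ, the gauge identity ε·T⁻¹·∂(T) + T⁻¹·U^{NLS}(ξ)·T = (λ/2)·I₂ − [[λ, −w],[1, Λ⁻¹(v)]] holds; equivalently, conjugation by T carries the operator ε∂ + U^{NLS}(ξ) to 𝒜(λ) + (λ/2)·I₂, where 𝒜(λ) := ε∂ − [[λ, −w],[1, Λ⁻¹(v)]]. -/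
open Polynomial

theorem Matrix.diag_fin_two_mul_mul_diag {R : Type*} [Semiring R]
    (a d a' d' m₁₁ m₁₂ m₂₁ m₂₂ : R) :
    !![a, 0; 0, d] * !![m₁₁, m₁₂; m₂₁, m₂₂] * !![a', 0; 0, d'] =
      !![a * m₁₁ * a', a * m₁₂ * d'; d * m₂₁ * a', d * m₂₂ * d'] := by
  simp

theorem toda_nls_gauge_identity_general
    {B : Type*} [CommRing B] [Algebra ℂ B]
    -- B is a commutative algebra over ℂ[ε,ε⁻¹]:
    (eb : B)
    (del : Derivation ℂ B B)
    (lam : B ≃+* B)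
    (q r v w : B) (r' : B) (hr' : r * r' = 1)
    (hqr : q * r = w)
    (hdr : eb * del r = -(r * lam.symm v)) :
    (C eb : B[X]) • ((!![(-1 : B[X]), 0; 0, C r']) * !![(0 : B[X]), 0; 0, C (del r)])
        + (!![(-1 : B[X]), 0; 0, C r']) * !![-X, -(C q); C r, X] *
            (!![(-1 : B[X]), 0; 0, C r]) =
      (X : B[X]) • (1 : Matrix (Fin 2) (Fin 2) B[X])
        - !![2 * X, -(C w); 1, C (lam.symm v)] := by
  have hr'r : C r' * C r = (1 : B[X]) := by rw [← C_mul, mul_comm, hr', C_1]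
  -- ε ∂ log r = -Λ⁻¹ v
  have hlog : C eb * (C r' * C (del r)) = -C (lam.symm v) := by
    rw [← C_mul, ← C_mul, ← C_neg]
    congr 1
    linear_combination r' * hdr - lam.symm v * hr'
  have hgauge : (C eb : B[X]) • (!![(-1 : B[X]), 0; 0, C r'] * !![0, 0; 0, C (del r)]) =
      !![0, 0; 0, -C (lam.symm v)] := by
    rw [Matrix.mul_fin_two]
    ext i j : 1; fin_cases i <;> fin_cases j <;> simp [hlog]
  have hconj : !![(-1 : B[X]), 0; 0, C r'] * !![-X, -(C q); C r, X] * !![-1, 0; 0, C r] =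
      !![-X, C w; -1, X] := by
    rw [Matrix.diag_fin_two_mul_mul_diag]
    ext i j : 1; fin_cases i <;> fin_cases j <;> simp [← hqr, hr'r, mul_right_comm _ X]
  rw [hgauge, hconj, Matrix.one_fin_two]
  ext i j : 1; fin_cases i <;> fin_cases j <;> simp <;> ring

/-- the gauge identity
ε·T⁻¹·∂(T) + T⁻¹·U^{NLS}(ξ)·T = (λ/2)·I₂ − [[λ, −w],[1, Λ⁻¹(v)]], with λ = 2ξ,
as an identity of 2×2 matrices over B[ξ]. -/
theorem toda_nls_gauge_identity
    {B : Type*} [CommRing B] [Algebra ℂ B]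
    -- B is a commutative algebra over ℂ[ε,ε⁻¹]:
    (eb ebi : B) (hebi : eb * ebi = 1)
    (del : Derivation ℂ B B) (hdeps : del eb = 0)
    (lam : B ≃+* B) (hlamdel : ∀ x, lam (del x) = del (lam x)) (hlameps : lam eb = eb)
    (q r v w : B) (q' r' : B) (hq' : q * q' = 1) (hr' : r * r' = 1)
    (hqr : q * r = w) (hqr1 : lam.symm q * r = 1)
    (hdq : eb * del q = q * v) (hdr : eb * del r = -(r * lam.symm v)) :
    (C eb : B[X]) • ((!![(-1 : B[X]), 0; 0, C r']) * !![(0 : B[X]), 0; 0, C (del r)])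
        + (!![(-1 : B[X]), 0; 0, C r']) * !![-X, -(C q); C r, X] *
            (!![(-1 : B[X]), 0; 0, C r]) =
      (X : B[X]) • (1 : Matrix (Fin 2) (Fin 2) B[X])
        - !![2 * X, -(C w); 1, C (lam.symm v)] :=
  toda_nls_gauge_identity_general eb del lam q r v w r' hr' hqr hdr
end

section
/- Set R̂(ξ) := 2·T·R(2ξ)·T⁻¹. Then: R̂(ξ) − diag(2,0) has entries in ξ⁻¹·B[[ξ⁻¹]]; ε∂(R̂(ξ)) + [U^{NLS}(ξ), R̂(ξ)] = 0; tr R̂(ξ) = 2; and det R̂(ξ) = 0. Consequently R̂(ξ) = ev(R^{NLS}(ξ)), where R^{NLS}(ξ) is the unique basic matrix resolvent over 𝒜 and ev : 𝒜[ε] → B is the ring homomorphism with ev(qᵢ) = ∂^i(q), ev(rᵢ) = ∂^i(r), ev(ε) = ε, applied coefficientwise and entrywise. -/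
set_option synthInstance.maxHeartbeats 1000000
set_option maxHeartbeats 1000000

noncomputable section

variable {B : Type*} [CommRing B] [Algebra ℂ B]

/-- λ (resp. ξ), as a Laurent series in its inverse: the Hahn-series exponent `n`
records the power of λ⁻¹. -/
def lamB (B : Type*) [CommRing B] : LaurentSeries B := HahnSeries.single (-1 : ℤ) 1

/-- Constants of B, as Laurent series. -/
def CB (x : B) : LaurentSeries B := HahnSeries.C x

/-- A derivation of B applied coefficientwise to a Laurent series. -/
def dmapB (d : Derivation ℂ B B) : LaurentSeries B → LaurentSeries B :=
  coeffMap ⟨fun x => d x, map_zero d⟩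

/-- A ring automorphism of B applied coefficientwise to a Laurent series. -/
def amapB (f : B ≃+* B) : LaurentSeries B → LaurentSeries B :=
  coeffMap ⟨fun x => f x, map_zero f⟩

/-- Polynomial part in λ: keep the exponents n ≤ 0 of λ⁻¹. -/
def polyPartB (x : LaurentSeries B) : LaurentSeries B where
  coeff n := if n ≤ 0 then x.coeff n else 0
  isPWO_support' := x.isPWO_support'.mono (by
    intro n hn
    simp only [Function.mem_support, ne_eq] at hn ⊢
    intro h
    apply hn
    rw [h]
    simp)

/-- The substitution λ = 2ξ: the coefficient of ξ⁻ⁿ in R(2ξ) is 2⁻ⁿ times the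
coefficient of λ⁻ⁿ in R(λ). -/
def scaleHalfB (x : LaurentSeries B) : LaurentSeries B where
  coeff n := ((2 : ℂ) ^ (-n) : ℂ) • x.coeff n
  isPWO_support' := x.isPWO_support'.mono (by
    intro n hn
    simp only [Function.mem_support, ne_eq] at hn ⊢
    exact fun h => hn (by rw [h, smul_zero]))

/-- U^{Toda}(λ) = [[v − λ, w],[−1, 0]]. -/
def UToda (v w : B) : Matrix (Fin 2) (Fin 2) (LaurentSeries B) :=
  !![CB v - lamB B, CB w; -1, 0]

/-- V₀(λ) = [[λ, −w],[1, Λ⁻¹(v)]]. -/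
def VToda0 (v w : B) (lamAut : B ≃+* B) : Matrix (Fin 2) (Fin 2) (LaurentSeries B) :=
  !![lamB B, -(CB w); 1, CB (lamAut.symm v)]

/-- The hypotheses on the Toda basic matrix resolvent R(λ). -/
def IsTodaMR (eb v w : B) (lamAut : B ≃+* B) (del : Derivation ℂ B B)
    (R : Matrix (Fin 2) (Fin 2) (LaurentSeries B)) : Prop :=
  (∀ i j : Fin 2, ∀ n : ℤ, n < 0 → (R i j).coeff n = 0) ∧
  (∀ i j : Fin 2, ∀ n : ℤ, n ≤ 0 →
    ((R - !![(1 : LaurentSeries B), 0; 0, 0]) i j).coeff n = 0) ∧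
  (R.map (amapB lamAut) * UToda v w = UToda v w * R) ∧
  R.trace = 1 ∧
  R.det = 0 ∧
  (CB eb • R.map (dmapB del) = VToda0 v w lamAut * R - R * VToda0 v w lamAut)

/-- R̂(ξ) = 2·T·R(2ξ)·T⁻¹. -/
def Rhat (r r' : B) (R : Matrix (Fin 2) (Fin 2) (LaurentSeries B)) :
    Matrix (Fin 2) (Fin 2) (LaurentSeries B) :=
  (2 : LaurentSeries B) •
    (!![(-1 : LaurentSeries B), 0; 0, CB r] * R.map scaleHalfB *
      !![(-1 : LaurentSeries B), 0; 0, CB r'])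

end

/-!
The substitution `λ = 2ξ` is a ring endomorphism of Laurent series commuting with `∂`, so it turns
the Toda equation `ε∂R = [V₀, R]` into one for `R(2ξ)`. Conjugation by `T = diag(-1, r)` is a gauge
transformation: it replaces the connection by `ε(∂T)T⁻¹ + T V₀(2ξ) T⁻¹`, which the relations
`qr = w`, `rr⁻¹ = 1`, `ε∂r = -rΛ⁻¹(v)` reduce to `ξ - U^{NLS}(ξ)`, and the scalar `ξ` drops out of
the commutator. Scaling and conjugation preserve trace and determinant, so `R̂` satisfies (i)–(iv).

Since `ev` intertwines the two derivations (they agree on `qᵢ, rᵢ, ε^{±1}`), `ev(R^{NLS})` satisfies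
(i)–(iv) too. These conditions have at most one solution: if two solutions agree up to order
`ξ⁻ᵏ`, the off-diagonal entries of the Lax equation give agreement of the off-diagonal entries at
order `ξ⁻ᵏ⁻¹`, and `det = 0` gives it for the diagonal ones.
-/

noncomputable section

open HahnSeries

section LaurentSeriesCoefficients

variable {B : Type*} [CommRing B]

theorem coeff_mul_eq_zero_of_forall_le {x y : LaurentSeries B} {k l m : ℤ}
    (hx : ∀ i ≤ k, x.coeff i = 0) (hy : ∀ j ≤ l, y.coeff j = 0) (hm : m ≤ k + l + 1) :
    (x * y).coeff m = 0 := by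
  rw [coeff_mul]
  refine Finset.sum_eq_zero fun ij hij => ?_
  obtain ⟨-, -, hsum⟩ := Finset.mem_antidiagonal.1 hij
  rcases le_or_gt ij.1 k with hi | hi
  · rw [hx _ hi, zero_mul]
  · rw [hy _ (by omega), mul_zero]

theorem Matrix.coeff_mul_apply_eq_zero_of_forall_le {m n o : Type*} [Fintype n]
    {M : Matrix m n (LaurentSeries B)} {N : Matrix n o (LaurentSeries B)} {k l : ℤ}
    (hM : ∀ i j, ∀ a ≤ k, (M i j).coeff a = 0)
    (hN : ∀ i j, ∀ b ≤ l, (N i j).coeff b = 0)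
    (i : m) (j : o) {c : ℤ} (hc : c ≤ k + l + 1) :
    ((M * N) i j).coeff c = 0 := by
  rw [Matrix.mul_apply, coeff_sum]
  exact Finset.sum_eq_zero fun t _ => coeff_mul_eq_zero_of_forall_le (hM i t) (hN t j) hc

theorem coeff_mul_of_support_subset {x y x' y' : LaurentSeries B}
    (hx : x'.support ⊆ x.support) (hy : y'.support ⊆ y.support) (n : ℤ) :
    (x' * y').coeff n = ∑ ij ∈ Finset.antidiagonal x.isPWO_support y.isPWO_support n,
      x'.coeff ij.1 * y'.coeff ij.2 := by
  rw [coeff_mul_left' x.isPWO_support hx]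
  refine Finset.sum_subset (Finset.antidiagonal_mono_right hy) fun ij hij hij' => ?_
  rw [Finset.mem_antidiagonal] at hij hij'
  have hy' : y'.coeff ij.2 = 0 := by_contra fun h => hij' ⟨hij.1, h, hij.2.2⟩
  rw [hy', mul_zero]

theorem coeff_CB_mul (c : B) (y : LaurentSeries B) (n : ℤ) :
    (CB c * y).coeff n = c * y.coeff n :=
  coeff_single_zero_mul

theorem coeff_lamB_mul (x : LaurentSeries B) (n : ℤ) :
    (lamB B * x).coeff n = x.coeff (n + 1) := by
  simpa [lamB] using coeff_single_mul_add (r := (1 : B)) (x := x) (a := n + 1) (b := -1)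

variable [Algebra ℂ B]

theorem dmapB_coeff (d : Derivation ℂ B B) (x : LaurentSeries B) (n : ℤ) :
    (dmapB d x).coeff n = d (x.coeff n) := rfl

variable (d : Derivation ℂ B B)

theorem dmapB_sub (x y : LaurentSeries B) : dmapB d (x - y) = dmapB d x - dmapB d y := by
  ext n
  simp only [dmapB_coeff, coeff_sub, map_sub]

theorem dmapB_neg (x : LaurentSeries B) : dmapB d (-x) = -dmapB d x := by
  ext n
  simp only [dmapB_coeff, coeff_neg, map_neg]

theorem dmapB_sum {ι : Type*} (s : Finset ι) (x : ι → LaurentSeries B) :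
    dmapB d (∑ i ∈ s, x i) = ∑ i ∈ s, dmapB d (x i) := by
  ext n
  simp only [dmapB_coeff, coeff_sum, map_sum]

theorem dmapB_CB (c : B) : dmapB d (CB c) = CB (d c) := by
  ext n
  by_cases hn : n = 0 <;> simp [dmapB_coeff, CB, hn]

theorem dmapB_natCast (k : ℕ) : dmapB d k = 0 := by
  rw [← map_natCast (C : B →+* LaurentSeries B), ← CB, dmapB_CB, d.map_natCast, CB, map_zero]

theorem dmapB_zero : dmapB d 0 = 0 := by exact_mod_cast dmapB_natCast d 0

theorem dmapB_one : dmapB d 1 = 0 := by exact_mod_cast dmapB_natCast d 1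

theorem dmapB_mul (x y : LaurentSeries B) :
    dmapB d (x * y) = dmapB d x * y + x * dmapB d y := by
  have hsupp : ∀ z : LaurentSeries B, (dmapB d z).support ⊆ z.support := fun z n hn h =>
    hn (show d (z.coeff n) = 0 by rw [h, map_zero])
  ext n
  rw [coeff_add, coeff_mul_of_support_subset (hsupp x) subset_rfl,
    coeff_mul_of_support_subset subset_rfl (hsupp y), ← Finset.sum_add_distrib, dmapB_coeff,
    coeff_mul, map_sum]
  refine Finset.sum_congr rfl fun _ _ => ?_
  rw [Derivation.leibniz, smul_eq_mul, smul_eq_mul, dmapB_coeff, dmapB_coeff]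
  ring

end LaurentSeriesCoefficients

section ScaleHalf

variable {B : Type*} [CommRing B] [Algebra ℂ B]

theorem scaleHalfB_coeff (x : LaurentSeries B) (n : ℤ) :
    (scaleHalfB x).coeff n = (2 : ℂ) ^ (-n) • x.coeff n := rfl

theorem scaleHalfB_mul (x y : LaurentSeries B) :
    scaleHalfB (x * y) = scaleHalfB x * scaleHalfB y := by
  have hsupp : ∀ z : LaurentSeries B, (scaleHalfB z).support ⊆ z.support := fun z n hn h =>
    hn (by rw [scaleHalfB_coeff, h, smul_zero])
  ext n
  rw [coeff_mul_of_support_subset (hsupp x) (hsupp y), scaleHalfB_coeff, coeff_mul,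
    Finset.smul_sum]
  refine Finset.sum_congr rfl fun ij hij => ?_
  obtain ⟨-, -, hsum⟩ := Finset.mem_antidiagonal.1 hij
  rw [scaleHalfB_coeff, scaleHalfB_coeff, smul_mul_smul_comm, ← zpow_add₀ two_ne_zero, ← hsum,
    neg_add]

def scaleHalfRingHom (B : Type*) [CommRing B] [Algebra ℂ B] :
    LaurentSeries B →+* LaurentSeries B where
  toFun := scaleHalfB
  map_one' := by
    ext n
    rw [scaleHalfB_coeff, coeff_one]
    split_ifs with h <;> simp [h]
  map_mul' := scaleHalfB_mul
  map_zero' := by ext n; simp [scaleHalfB_coeff]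
  map_add' x y := by ext n; simp [scaleHalfB_coeff, smul_add]

theorem scaleHalfRingHom_apply (x : LaurentSeries B) : scaleHalfRingHom B x = scaleHalfB x := rfl

theorem scaleHalfRingHom_CB (c : B) : scaleHalfRingHom B (CB c) = CB c := by
  ext n
  by_cases hn : n = 0 <;> simp [scaleHalfRingHom_apply, scaleHalfB_coeff, CB, hn]

theorem scaleHalfRingHom_lamB : scaleHalfRingHom B (lamB B) = 2 * lamB B := by
  ext n
  by_cases hn : n = -1
  · subst hn
    simp [scaleHalfRingHom_apply, scaleHalfB_coeff, lamB, two_mul, two_smul]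
  · simp [scaleHalfRingHom_apply, scaleHalfB_coeff, lamB, coeff_single_of_ne hn, two_mul]

theorem scaleHalfRingHom_dmapB (d : Derivation ℂ B B) (x : LaurentSeries B) :
    scaleHalfRingHom B (dmapB d x) = dmapB d (scaleHalfRingHom B x) := by
  ext n
  rw [scaleHalfRingHom_apply, scaleHalfB_coeff, dmapB_coeff, dmapB_coeff, scaleHalfRingHom_apply,
    scaleHalfB_coeff, d.map_smul]

end ScaleHalf

section MatrixDerivation

variable {B : Type*} [CommRing B] [Algebra ℂ B] (d : Derivation ℂ B B)

theorem Matrix.map_dmapB_mul {m n o : Type*} [Fintype n] (M : Matrix m n (LaurentSeries B))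
    (N : Matrix n o (LaurentSeries B)) :
    (M * N).map (dmapB d) = M.map (dmapB d) * N + M * N.map (dmapB d) := by
  ext i j
  simp only [Matrix.map_apply, Matrix.mul_apply, Matrix.add_apply, dmapB_sum, dmapB_mul,
    Finset.sum_add_distrib]

theorem Matrix.map_dmapB_one {n : Type*} [DecidableEq n] :
    (1 : Matrix n n (LaurentSeries B)).map (dmapB d) = 0 := by
  refine Matrix.ext fun i j => ?_
  rw [Matrix.map_apply, Matrix.one_apply, Matrix.zero_apply]
  split_ifs
  exacts [dmapB_one d, dmapB_zero d]

theorem Matrix.map_dmapB_smul_of_eq_zero {m n : Type*} {c : LaurentSeries B} (hc : dmapB d c = 0)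
    (M : Matrix m n (LaurentSeries B)) : (c • M).map (dmapB d) = c • M.map (dmapB d) := by
  ext i j
  simp [dmapB_mul, hc]

theorem lax_gauge {n : Type*} [Fintype n] [DecidableEq n] {e : LaurentSeries B}
    {T T' V X : Matrix n n (LaurentSeries B)}
    (hTT' : T * T' = 1) (hT'T : T' * T = 1) (hX : e • X.map (dmapB d) = V * X - X * V) :
    e • (T * X * T').map (dmapB d)
      = (e • T.map (dmapB d) * T' + T * V * T') * (T * X * T')
        - (T * X * T') * (e • T.map (dmapB d) * T' + T * V * T') := by
  set dT := T.map (dmapB d)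
  have hdT' : T'.map (dmapB d) = -(T' * dT * T') := by
    have h := congrArg (Matrix.map · (dmapB d)) hTT'
    simp only [Matrix.map_dmapB_mul, Matrix.map_dmapB_one] at h
    calc T'.map (dmapB d) = T' * T * T'.map (dmapB d) := by rw [hT'T, Matrix.one_mul]
      _ = T' * (dT * T' + T * T'.map (dmapB d)) - T' * dT * T' := by noncomm_ring
      _ = -(T' * dT * T') := by rw [h, Matrix.mul_zero, zero_sub]
  have hcancel : ∀ Z : Matrix n n (LaurentSeries B), T' * (T * Z) = Z := fun Z => by
    rw [← Matrix.mul_assoc, hT'T, Matrix.one_mul]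
  rw [Matrix.map_dmapB_mul, Matrix.map_dmapB_mul, hdT']
  calc e • ((dT * X + T * X.map (dmapB d)) * T' + T * X * -(T' * dT * T'))
      = e • dT * X * T' + T * (e • X.map (dmapB d)) * T' - T * X * T' * (e • dT * T') := by
        simp only [smul_add, smul_neg, Matrix.smul_mul, Matrix.mul_smul, Matrix.add_mul,
          Matrix.mul_neg, Matrix.mul_assoc]
        abel
    _ = _ := by
        rw [hX]
        simp only [Matrix.add_mul, Matrix.mul_add, Matrix.sub_mul, Matrix.mul_sub,
          Matrix.mul_assoc, hcancel]
        abel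

end MatrixDerivation

section NLSResolvent

variable {B : Type*} [CommRing B] [Algebra ℂ B]

def UNLS (q r : B) : Matrix (Fin 2) (Fin 2) (LaurentSeries B) :=
  !![-(lamB B), -(CB q); CB r, lamB B]

/-- Conditions (i)–(iv) on a basic NLS matrix resolvent, over `B`. -/
structure IsNLSResolvent (eb q r : B) (del : Derivation ℂ B B)
    (M : Matrix (Fin 2) (Fin 2) (LaurentSeries B)) : Prop where
  coeff_sub_eq_zero : ∀ i j : Fin 2, ∀ n : ℤ, n ≤ 0 →
    ((M - !![(2 : LaurentSeries B), 0; 0, 0]) i j).coeff n = 0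
  lax : CB eb • M.map (dmapB del) + (UNLS q r * M - M * UNLS q r) = 0
  trace_eq : M.trace = 2
  det_eq : M.det = 0

theorem eq_zero_of_two_mul_eq_zero {y : B} (h : 2 * y = 0) : y = 0 := by
  have h2 : IsUnit (2 : B) := by
    simpa only [map_ofNat] using
      (isUnit_iff_ne_zero.2 (two_ne_zero : (2 : ℂ) ≠ 0)).map (algebraMap ℂ B)
  exact h2.mul_right_eq_zero.1 h

variable {eb q r : B} {del : Derivation ℂ B B}

-- The `ξ`-terms of `U` contribute `-2ξ D₀₁` and `2ξ D₁₀` to the off-diagonal entries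
-- of `[U, D]`.
theorem offDiag_coeff_succ_eq_zero {D : Matrix (Fin 2) (Fin 2) (LaurentSeries B)}
    (hlax : CB eb • D.map (dmapB del) + (UNLS q r * D - D * UNLS q r) = 0) {k : ℤ}
    (hk : ∀ i j, (D i j).coeff k = 0) :
    (D 0 1).coeff (k + 1) = 0 ∧ (D 1 0).coeff (k + 1) = 0 := by
  have h01 := congrArg (fun x => x.coeff k) (congrFun (congrFun hlax 0) 1)
  have h10 := congrArg (fun x => x.coeff k) (congrFun (congrFun hlax 1) 0)
  simp only [UNLS, Matrix.add_apply, Matrix.sub_apply, Matrix.smul_apply, Matrix.map_apply,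
    Matrix.mul_apply, Fin.sum_univ_two, Matrix.of_apply, Matrix.cons_val', Matrix.cons_val_zero,
    Matrix.cons_val_one, Matrix.empty_val', Matrix.cons_val_fin_one, Matrix.zero_apply,
    smul_eq_mul, mul_comm (D _ _), neg_mul, coeff_add, coeff_sub, coeff_neg, coeff_zero,
    coeff_CB_mul, coeff_lamB_mul, dmapB_coeff, hk, map_zero, mul_zero] at h01 h10
  exact ⟨eq_zero_of_two_mul_eq_zero (by linear_combination -h01),
    eq_zero_of_two_mul_eq_zero (by linear_combination h10)⟩

variable {M M' : Matrix (Fin 2) (Fin 2) (LaurentSeries B)}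

theorem IsNLSResolvent.coeff_entry_eq_zero (h : IsNLSResolvent eb q r del M) {m : ℤ}
    (hm : m ≤ 0) :
    (M 0 0 - 2).coeff m = 0 ∧ (M 0 1).coeff m = 0 ∧ (M 1 0).coeff m = 0 ∧
      (M 1 1).coeff m = 0 := by
  have h00 := h.coeff_sub_eq_zero 0 0 m hm
  have h01 := h.coeff_sub_eq_zero 0 1 m hm
  have h10 := h.coeff_sub_eq_zero 1 0 m hm
  have h11 := h.coeff_sub_eq_zero 1 1 m hm
  simp only [Matrix.sub_apply, Matrix.of_apply, Matrix.cons_val', Matrix.cons_val_zero,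
    Matrix.cons_val_one, Matrix.empty_val', Matrix.cons_val_fin_one, sub_zero] at h00 h01 h10 h11
  exact ⟨h00, h01, h10, h11⟩

theorem IsNLSResolvent.lax_sub (h : IsNLSResolvent eb q r del M)
    (h' : IsNLSResolvent eb q r del M') :
    CB eb • (M - M').map (dmapB del) + (UNLS q r * (M - M') - (M - M') * UNLS q r) = 0 := by
  rw [Matrix.map_sub (dmapB del) (dmapB_sub del), smul_sub, Matrix.mul_sub, Matrix.sub_mul]
  calc _ = (CB eb • M.map (dmapB del) + (UNLS q r * M - M * UNLS q r))
        - (CB eb • M'.map (dmapB del) + (UNLS q r * M' - M' * UNLS q r)) := by abel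
    _ = 0 := by rw [h.lax, h'.lax, sub_zero]

-- Up to products involving only lower coefficients of `M - M'`, the `ξ⁻ᵏ⁻¹`-coefficient of
-- `det M - det M'` is twice that of `(M - M') 1 1`.
theorem IsNLSResolvent.diag_coeff_succ_eq_zero (h : IsNLSResolvent eb q r del M)
    (h' : IsNLSResolvent eb q r del M') {k : ℤ}
    (hk : ∀ i j, ∀ m ≤ k, ((M - M') i j).coeff m = 0) :
    ((M - M') 1 1).coeff (k + 1) = 0 := by
  set D := M - M' with hD
  have hdet : 2 * D 1 1 + ((M' 0 0 - 2) * D 1 1 + D 0 0 * M 1 1 - D 0 1 * M 1 0 - M' 0 1 * D 1 0)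
      = M.det - M'.det := by
    simp only [hD, Matrix.sub_apply, Matrix.det_fin_two]
    ring
  rw [h.det_eq, h'.det_eq, sub_zero] at hdet
  have hcoeff := congrArg (fun x => x.coeff (k + 1)) hdet
  have hk1 : k + 1 ≤ 0 + k + 1 := by omega
  have hk1' : k + 1 ≤ k + 0 + 1 := by omega
  simp only [coeff_add, coeff_sub, coeff_zero,
    coeff_mul_eq_zero_of_forall_le (fun m hm => (h'.coeff_entry_eq_zero hm).1) (hk 1 1) hk1,
    coeff_mul_eq_zero_of_forall_le (hk 0 0) (fun m hm => (h.coeff_entry_eq_zero hm).2.2.2) hk1',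
    coeff_mul_eq_zero_of_forall_le (hk 0 1) (fun m hm => (h.coeff_entry_eq_zero hm).2.2.1) hk1',
    coeff_mul_eq_zero_of_forall_le (fun m hm => (h'.coeff_entry_eq_zero hm).2.1) (hk 1 0) hk1,
    two_mul, add_zero, sub_zero] at hcoeff
  exact eq_zero_of_two_mul_eq_zero (by rw [two_mul]; exact hcoeff)

theorem IsNLSResolvent.coeff_sub_succ_eq_zero (h : IsNLSResolvent eb q r del M)
    (h' : IsNLSResolvent eb q r del M') {k : ℤ}
    (hk : ∀ i j, ∀ m ≤ k, ((M - M') i j).coeff m = 0) (i j : Fin 2) :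
    ((M - M') i j).coeff (k + 1) = 0 := by
  obtain ⟨h01, h10⟩ := offDiag_coeff_succ_eq_zero (h.lax_sub h') fun i j => hk i j k le_rfl
  have h11 := h.diag_coeff_succ_eq_zero h' hk
  have htrace : (M - M') 0 0 = -(M - M') 1 1 := by
    have := congrArg₂ (· - ·) h.trace_eq h'.trace_eq
    simp only [Matrix.trace_fin_two, Matrix.sub_apply, sub_self] at this ⊢
    linear_combination this
  match i, j with
  | 0, 0 => rw [htrace, coeff_neg, h11, neg_zero]
  | 0, 1 => exact h01
  | 1, 0 => exact h10
  | 1, 1 => exact h11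

theorem IsNLSResolvent.unique (h : IsNLSResolvent eb q r del M)
    (h' : IsNLSResolvent eb q r del M') : M = M' := by
  have hvanish : ∀ k : ℕ, ∀ i j, ∀ m ≤ (k : ℤ), ((M - M') i j).coeff m = 0 := by
    intro k
    induction k with
    | zero =>
      intro i j m hm
      have hE : (M - M') i j = (M - !![(2 : LaurentSeries B), 0; 0, 0]) i j
          - (M' - !![(2 : LaurentSeries B), 0; 0, 0]) i j := by
        simp only [Matrix.sub_apply, sub_sub_sub_cancel_right]
      rw [hE, coeff_sub, h.coeff_sub_eq_zero i j m hm, h'.coeff_sub_eq_zero i j m hm, sub_zero]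
    | succ k ih =>
      intro i j m hm
      rcases (show m ≤ k ∨ m = k + 1 by omega) with hm | rfl
      · exact ih i j m hm
      · exact h.coeff_sub_succ_eq_zero h' ih i j
  rw [← sub_eq_zero]
  ext i j m
  exact hvanish m.toNat i j m (Int.self_le_toNat m)

end NLSResolvent

section TodaToNLS

variable {B : Type*} [CommRing B]

def gaugeT (c : B) : Matrix (Fin 2) (Fin 2) (LaurentSeries B) := !![-1, 0; 0, CB c]

theorem gaugeT_mul_gaugeT {r r' : B} (hr' : r * r' = 1) : gaugeT r * gaugeT r' = 1 := by
  rw [gaugeT, gaugeT, Matrix.mul_fin_two, Matrix.one_fin_two]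
  simp [CB, hr']

theorem gaugeT_coeff_eq_zero (c : B) (i j : Fin 2) {m : ℤ} (hm : m ≤ -1) :
    (gaugeT c i j).coeff m = 0 := by
  have hm0 : m ≠ 0 := by omega
  fin_cases i <;> fin_cases j <;> simp [gaugeT, CB, coeff_one, hm0, coeff_single_of_ne hm0]

variable [Algebra ℂ B]

theorem Rhat_eq (r r' : B) (R : Matrix (Fin 2) (Fin 2) (LaurentSeries B)) :
    Rhat r r' R = (2 : LaurentSeries B) • (gaugeT r * R.map (scaleHalfRingHom B) * gaugeT r') :=
  rfl

variable {eb q r r' v w : B} {lam : B ≃+* B} {del : Derivation ℂ B B}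
  {R : Matrix (Fin 2) (Fin 2) (LaurentSeries B)}

theorem IsTodaMR.lax_scaleHalf (hR : IsTodaMR eb v w lam del R) :
    CB eb • (R.map (scaleHalfRingHom B)).map (dmapB del)
      = (VToda0 v w lam).map (scaleHalfRingHom B) * R.map (scaleHalfRingHom B)
        - R.map (scaleHalfRingHom B) * (VToda0 v w lam).map (scaleHalfRingHom B) := by
  obtain ⟨-, -, -, -, -, hlax⟩ := hR
  have h := congrArg (scaleHalfRingHom B).mapMatrix hlax
  rw [map_sub, map_mul, map_mul, RingHom.mapMatrix_apply,
    Matrix.map_smul' _ _ _ (map_mul (scaleHalfRingHom B)), scaleHalfRingHom_CB,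
    Matrix.map_map] at h
  simp only [RingHom.mapMatrix_apply] at h
  rw [← h, Matrix.map_map]
  congr 2
  funext x
  exact (scaleHalfRingHom_dmapB del x).symm

/-- The connection obtained by gauging `V₀(2ξ)` with `T` is `ξ - U^{NLS}(ξ)`. -/
theorem gauge_VToda0 (hr' : r * r' = 1) (hqr : q * r = w) (hdr : eb * del r = -(r * lam.symm v)) :
    CB eb • (gaugeT r).map (dmapB del) * gaugeT r'
        + gaugeT r * (VToda0 v w lam).map (scaleHalfRingHom B) * gaugeT r'
      = lamB B • 1 - UNLS q r := by
  have hq : CB w * CB r' = CB q := by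
    simp only [CB, ← map_mul, ← hqr, mul_assoc, hr', mul_one]
  have hv : CB eb * CB (del r) * CB r' + CB r * CB (lam.symm v) * CB r' = 0 := by
    simp only [CB, ← map_mul, ← map_add, ← add_mul, hdr, neg_add_cancel, zero_mul, map_zero]
  refine Matrix.ext fun i j => ?_
  fin_cases i <;> fin_cases j <;>
    simp only [gaugeT, VToda0, UNLS, Matrix.add_apply, Matrix.sub_apply, Matrix.smul_apply,
      Matrix.map_apply, Matrix.mul_apply, Fin.sum_univ_two, Matrix.of_apply, Matrix.cons_val',
      Matrix.cons_val_zero, Matrix.cons_val_one, Matrix.empty_val', Matrix.cons_val_fin_one,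
      Matrix.one_apply_eq, Matrix.one_apply_ne, Fin.zero_eta, Fin.mk_one, Fin.isValue, ne_eq,
      zero_ne_one, one_ne_zero, not_false_eq_true, smul_eq_mul, map_neg, map_one,
      dmapB_CB, dmapB_neg, dmapB_one, dmapB_zero, scaleHalfRingHom_CB, scaleHalfRingHom_lamB,
      neg_zero, mul_one, mul_zero, zero_mul, add_zero, zero_add]
  · ring
  · linear_combination hq
  · ring
  · linear_combination hv

theorem Rhat_coeff_sub_eq_zero (hR : IsTodaMR eb v w lam del R) (i j : Fin 2) {n : ℤ}
    (hn : n ≤ 0) : ((Rhat r r' R - !![(2 : LaurentSeries B), 0; 0, 0]) i j).coeff n = 0 := by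
  set E : Matrix (Fin 2) (Fin 2) (LaurentSeries B) := !![1, 0; 0, 0]
  have hE : (2 : LaurentSeries B) • (gaugeT r * E.map (scaleHalfRingHom B) * gaugeT r')
      = !![2, 0; 0, 0] := by
    refine Matrix.ext fun i j => ?_
    fin_cases i <;> fin_cases j <;>
      simp only [E, gaugeT, Matrix.smul_apply, Matrix.map_apply, Matrix.mul_apply,
        Fin.sum_univ_two, Matrix.of_apply, Matrix.cons_val', Matrix.cons_val_zero,
        Matrix.cons_val_one, Matrix.empty_val', Matrix.cons_val_fin_one, Fin.zero_eta, Fin.mk_one,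
        Fin.isValue, map_one, map_zero, smul_eq_mul, mul_one, mul_zero, zero_mul, add_zero,
        zero_add, mul_neg, neg_neg, neg_zero]
  have hdecomp : Rhat r r' R - !![2, 0; 0, 0]
      = (2 : LaurentSeries B) • (gaugeT r * (R - E).map (scaleHalfRingHom B) * gaugeT r') := by
    rw [Rhat_eq, Matrix.map_sub _ (map_sub _), Matrix.mul_sub, Matrix.sub_mul, smul_sub, hE]
  have hN : ∀ i j, ∀ m ≤ (0 : ℤ), ((R - E).map (scaleHalfRingHom B) i j).coeff m = 0 :=
    fun i j m hm => by
      rw [Matrix.map_apply, scaleHalfRingHom_apply, scaleHalfB_coeff, hR.2.1 i j m hm,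
        smul_zero]
  rw [hdecomp, Matrix.smul_apply, smul_eq_mul, two_mul, coeff_add,
    Matrix.coeff_mul_apply_eq_zero_of_forall_le
      (Matrix.coeff_mul_apply_eq_zero_of_forall_le (fun i j _ => gaugeT_coeff_eq_zero r i j) hN)
      (fun i j _ => gaugeT_coeff_eq_zero r' i j) i j (by omega), add_zero]

theorem Rhat_lax (hr' : r * r' = 1) (hqr : q * r = w) (hdr : eb * del r = -(r * lam.symm v))
    (hR : IsTodaMR eb v w lam del R) :
    CB eb • (Rhat r r' R).map (dmapB del)
      + (UNLS q r * Rhat r r' R - Rhat r r' R * UNLS q r) = 0 := by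
  have hY := lax_gauge del (gaugeT_mul_gaugeT hr') (gaugeT_mul_gaugeT (by rw [mul_comm, hr']))
    hR.lax_scaleHalf
  rw [gauge_VToda0 hr' hqr hdr] at hY
  have h2 : dmapB del 2 = 0 := by exact_mod_cast dmapB_natCast del 2
  rw [Rhat_eq, Matrix.map_dmapB_smul_of_eq_zero del h2, smul_comm, hY]
  simp only [Matrix.sub_mul, Matrix.mul_sub, Matrix.smul_mul, Matrix.mul_smul, Matrix.one_mul,
    Matrix.mul_one, smul_sub]
  abel

theorem Rhat_trace (hr' : r * r' = 1) (hR : IsTodaMR eb v w lam del R) :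
    (Rhat r r' R).trace = 2 := by
  rw [Rhat_eq, Matrix.trace_smul, Matrix.trace_mul_comm, ← Matrix.mul_assoc,
    gaugeT_mul_gaugeT (by rw [mul_comm, hr']), Matrix.one_mul, ← AddMonoidHom.map_trace,
    hR.2.2.2.1, map_one, smul_eq_mul, mul_one]

theorem Rhat_det (hR : IsTodaMR eb v w lam del R) : (Rhat r r' R).det = 0 := by
  rw [Rhat_eq, Matrix.det_smul, Matrix.det_mul, Matrix.det_mul, ← RingHom.mapMatrix_apply,
    ← RingHom.map_det, hR.2.2.2.2.1, map_zero, mul_zero, zero_mul, mul_zero]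

theorem isNLSResolvent_Rhat (hr' : r * r' = 1) (hqr : q * r = w)
    (hdr : eb * del r = -(r * lam.symm v)) (hR : IsTodaMR eb v w lam del R) :
    IsNLSResolvent eb q r del (Rhat r r' R) :=
  ⟨fun i j _ hn => Rhat_coeff_sub_eq_zero hR i j hn, Rhat_lax hr' hqr hdr hR, Rhat_trace hr' hR,
    Rhat_det hR⟩

end TodaToNLS

section Intertwining

variable {R A C : Type*} [CommRing R] [CommRing A] [CommRing C] [Algebra R A] [Algebra R C]

def intertwiningSubalgebra (f : A →ₐ[R] C) (d₁ : Derivation R A A) (d₂ : Derivation R C C) :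
    Subalgebra R A where
  carrier := {x | f (d₁ x) = d₂ (f x)}
  mul_mem' {x y} hx hy := by
    simp only [Set.mem_ofPred_eq, Derivation.leibniz, smul_eq_mul, map_add, map_mul] at hx hy ⊢
    rw [hx, hy]
  add_mem' {x y} hx hy := by
    simp only [Set.mem_ofPred_eq, map_add] at hx hy ⊢
    rw [hx, hy]
  algebraMap_mem' c := by
    simp only [Set.mem_ofPred_eq, Derivation.map_algebraMap, map_zero, AlgHom.commutes]

variable {f : A →ₐ[R] C} {d₁ : Derivation R A A} {d₂ : Derivation R C C}

theorem mem_intertwiningSubalgebra {x : A} :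
    x ∈ intertwiningSubalgebra f d₁ d₂ ↔ f (d₁ x) = d₂ (f x) := Iff.rfl

theorem mem_intertwiningSubalgebra_of_mul_eq_one {x y : A}
    (hx : x ∈ intertwiningSubalgebra f d₁ d₂) (hxy : x * y = 1) :
    y ∈ intertwiningSubalgebra f d₁ d₂ := by
  have hyx : y * x = 1 := by rw [mul_comm, hxy]
  have h₁ : d₁ y = -y ^ 2 • d₁ x := d₁.leibniz_of_mul_eq_one hyx
  have h₂ : d₂ (f y) = -f y ^ 2 • d₂ (f x) :=
    d₂.leibniz_of_mul_eq_one (by rw [← map_mul, hyx, map_one])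
  rw [mem_intertwiningSubalgebra] at hx ⊢
  rw [h₁, h₂, smul_eq_mul, smul_eq_mul, map_mul, map_neg, map_pow, hx]

end Intertwining

theorem NLSE.mem_of_generators_mem (S : Subalgebra ℂ NLSE) (hq : ∀ i, qv i ∈ S)
    (hr : ∀ i, rv i ∈ S) (he : eps ∈ S) (hei : epsInv ∈ S) (x : NLSE) : x ∈ S := by
  have hC : ∀ a : NLSA, LaurentPolynomial.C a ∈ S := by
    intro a
    induction a using MvPolynomial.induction_on with
    | C c => exact S.algebraMap_mem c
    | add p p' hp hp' => rw [map_add]; exact S.add_mem hp hp'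
    | mul_X p v hp =>
      rw [map_mul]
      refine S.mul_mem hp ?_
      cases v with
      | q i => exact hq i
      | r i => exact hr i
  have hT : ∀ n : ℤ, (LaurentPolynomial.T n : NLSE) ∈ S := by
    intro n
    induction n using Int.induction_on with
    | zero => rw [LaurentPolynomial.T_zero]; exact S.one_mem
    | succ k ih => rw [LaurentPolynomial.T_add]; exact S.mul_mem ih he
    | pred k ih => rw [LaurentPolynomial.T_sub]; exact S.mul_mem ih hei
  exact x.induction_on' (fun _ _ => S.add_mem) fun n a => S.mul_mem (hC a) (hT n)

theorem ev_delN_eq_del_ev {B : Type*} [CommRing B] [Algebra ℂ B] {eb q r : B}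
    {del : Derivation ℂ B B} (hdeps : del eb = 0) {delN : Derivation ℂ NLSE NLSE}
    (hdelN : IsDel delN) {ev : NLSE →ₐ[ℂ] B}
    (hevq : ∀ i, ev (qv i) = (⇑del)^[i] q) (hevr : ∀ i, ev (rv i) = (⇑del)^[i] r)
    (heve : ev eps = eb) (x : NLSE) : ev (delN x) = del (ev x) := by
  obtain ⟨hq, hr, he⟩ := hdelN
  have heps : eps ∈ intertwiningSubalgebra ev delN del := by
    rw [mem_intertwiningSubalgebra, he, heve, hdeps, map_zero]
  refine NLSE.mem_of_generators_mem _ (fun i => ?_) (fun i => ?_) heps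
    (mem_intertwiningSubalgebra_of_mul_eq_one heps ?_) x
  · rw [mem_intertwiningSubalgebra, hq, hevq, hevq, Function.iterate_succ_apply']
  · rw [mem_intertwiningSubalgebra, hr, hevr, hevr, Function.iterate_succ_apply']
  · rw [eps, epsInv, ← LaurentPolynomial.T_add, add_neg_cancel, LaurentPolynomial.T_zero]

def coeffRingHom {A C : Type*} [CommRing A] [CommRing C] (f : A →+* C) :
    LaurentSeries A →+* LaurentSeries C where
  toFun := coeffMap ⟨f, map_zero f⟩
  map_one' := HahnSeries.map_one f.toMonoidWithZeroHom
  map_mul' _ _ := HahnSeries.map_mul f.toNonUnitalRingHom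
  map_zero' := by ext n; exact map_zero f
  map_add' x y := by ext n; exact map_add f (x.coeff n) (y.coeff n)

section Evaluation

variable {B : Type*} [CommRing B] [Algebra ℂ B] {eb q r : B} {del : Derivation ℂ B B}
  {delN : Derivation ℂ NLSE NLSE} {ev : NLSE →ₐ[ℂ] B}

theorem coeffRingHom_coeff (x : NLSL) (n : ℤ) :
    (coeffRingHom (ev : NLSE →+* B) x).coeff n = ev (x.coeff n) := rfl

theorem coeffRingHom_CL (x : NLSE) : coeffRingHom (ev : NLSE →+* B) (CL x) = CB (ev x) := by
  ext n
  by_cases hn : n = 0 <;> simp [coeffRingHom_coeff, CL, CB, hn]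

theorem coeffRingHom_xiL : coeffRingHom (ev : NLSE →+* B) xiL = lamB B := by
  ext n
  by_cases hn : n = -1 <;> simp [coeffRingHom_coeff, xiL, lamB, hn]

theorem coeffRingHom_dmap (hev : ∀ x, ev (delN x) = del (ev x)) (x : NLSL) :
    coeffRingHom (ev : NLSE →+* B) (dmap delN x)
      = dmapB del (coeffRingHom (ev : NLSE →+* B) x) := by
  ext n
  exact hev (x.coeff n)

theorem Umat_map_coeffRingHom (hq : ev (qv 0) = q) (hr : ev (rv 0) = r) :
    Umat.map (coeffRingHom (ev : NLSE →+* B)) = UNLS q r := by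
  refine Matrix.ext fun i j => ?_
  fin_cases i <;> fin_cases j <;> simp [Umat, UNLS, coeffRingHom_CL, coeffRingHom_xiL, hq, hr]

theorem isNLSResolvent_map_ev {aN bN cN : NLSL} (hRN : IsMR delN aN bN cN)
    (hev : ∀ x, ev (delN x) = del (ev x)) (hq : ev (qv 0) = q) (hr : ev (rv 0) = r)
    (heps : ev eps = eb) :
    IsNLSResolvent eb q r del ((Rmat aN bN cN).map (coeffRingHom (ev : NLSE →+* B))) := by
  obtain ⟨ha, hb, hc, -, -, -, hlax, hdet⟩ := hRN
  set φ := coeffRingHom (ev : NLSE →+* B)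
  refine ⟨fun i j n hn => ?_, ?_, ?_, ?_⟩
  · have hmap : (Rmat aN bN cN).map φ = !![2 + φ aN, φ bN; φ cN, -φ aN] := by
      refine Matrix.ext fun i j => ?_
      fin_cases i <;> fin_cases j <;> simp [Rmat, map_ofNat]
    fin_cases i <;> fin_cases j <;>
      simp [hmap, φ, coeffRingHom_coeff, ha n hn, hb n hn, hc n hn]
  · have h := congrArg φ.mapMatrix hlax
    simp only [map_add, map_sub, map_mul, map_zero, RingHom.mapMatrix_apply] at h
    rwa [Matrix.map_smul' _ _ _ (map_mul φ), Matrix.map_map, coeffRingHom_CL, heps,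
      Umat_map_coeffRingHom hq hr, show ⇑φ ∘ dmap delN = dmapB del ∘ ⇑φ from funext
        (coeffRingHom_dmap hev), ← Matrix.map_map] at h
  · rw [← AddMonoidHom.map_trace φ, Rmat, Matrix.trace_fin_two_of, add_neg_cancel_right,
      map_ofNat]
  · rw [← RingHom.mapMatrix_apply, ← RingHom.map_det, hdet, map_zero]

end Evaluation

theorem toda_resolvent_conjugation_general
    {B : Type*} [CommRing B] [Algebra ℂ B]
    (eb : B)
    (del : Derivation ℂ B B) (hdeps : del eb = 0)
    (lam : B ≃+* B)
    (q r v w : B) (r' : B) (hr' : r * r' = 1)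
    (hqr : q * r = w)
    (hdr : eb * del r = -(r * lam.symm v))
    (R : Matrix (Fin 2) (Fin 2) (LaurentSeries B))
    (hR : IsTodaMR eb v w lam del R)
    -- the unique basic matrix resolvent over 𝒜
    (delN : Derivation ℂ NLSE NLSE) (hdelN : IsDel delN)
    (aN bN cN : NLSL) (hRN : IsMR delN aN bN cN)
    -- the evaluation homomorphism ev : 𝒜[ε,ε⁻¹] → B
    (ev : NLSE →ₐ[ℂ] B)
    (hevq : ∀ i, ev (qv i) = (⇑del)^[i] q)
    (hevr : ∀ i, ev (rv i) = (⇑del)^[i] r)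
    (heve : ev eps = eb) :
    (∀ i j : Fin 2, ∀ n : ℤ, n ≤ 0 →
      ((Rhat r r' R - !![(2 : LaurentSeries B), 0; 0, 0]) i j).coeff n = 0) ∧
    (CB eb • (Rhat r r' R).map (dmapB del)
        + (!![-(lamB B), -(CB q); CB r, lamB B] * Rhat r r' R
            - Rhat r r' R * !![-(lamB B), -(CB q); CB r, lamB B]) = 0) ∧
    (Rhat r r' R).trace = 2 ∧
    (Rhat r r' R).det = 0 ∧
    Rhat r r' R = (Rmat aN bN cN).map (coeffMap ⟨fun x => ev x, map_zero ev⟩) := by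
  have hhat := isNLSResolvent_Rhat hr' hqr hdr hR
  have hev := isNLSResolvent_map_ev hRN (ev_delN_eq_del_ev hdeps hdelN hevq hevr heve)
    (by simpa using hevq 0) (by simpa using hevr 0) heve
  exact ⟨hhat.coeff_sub_eq_zero, hhat.lax, hhat.trace_eq, hhat.det_eq, hhat.unique hev⟩

/-- R̂(ξ) := 2·T·R(2ξ)·T⁻¹ satisfies the four defining conditions of
the basic NLS matrix resolvent over B, and consequently equals the image under
`ev` of the unique basic matrix resolvent over 𝒜. -/
theorem toda_resolvent_conjugation
    {B : Type*} [CommRing B] [Algebra ℂ B]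
    (eb ebi : B) (hebi : eb * ebi = 1)
    (del : Derivation ℂ B B) (hdeps : del eb = 0)
    (lam : B ≃+* B) (hlamdel : ∀ x, lam (del x) = del (lam x)) (hlameps : lam eb = eb)
    (q r v w : B) (q' r' : B) (hq' : q * q' = 1) (hr' : r * r' = 1)
    (hqr : q * r = w) (hqr1 : lam.symm q * r = 1)
    (hdq : eb * del q = q * v) (hdr : eb * del r = -(r * lam.symm v))
    (R : Matrix (Fin 2) (Fin 2) (LaurentSeries B))
    (hR : IsTodaMR eb v w lam del R)
    -- the unique basic matrix resolvent over 𝒜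
    (delN : Derivation ℂ NLSE NLSE) (hdelN : IsDel delN)
    (aN bN cN : NLSL) (hRN : IsMR delN aN bN cN)
    -- the evaluation homomorphism ev : 𝒜[ε,ε⁻¹] → B
    (ev : NLSE →ₐ[ℂ] B)
    (hevq : ∀ i, ev (qv i) = (⇑del)^[i] q)
    (hevr : ∀ i, ev (rv i) = (⇑del)^[i] r)
    (heve : ev eps = eb) :
    (∀ i j : Fin 2, ∀ n : ℤ, n ≤ 0 →
      ((Rhat r r' R - !![(2 : LaurentSeries B), 0; 0, 0]) i j).coeff n = 0) ∧
    (CB eb • (Rhat r r' R).map (dmapB del)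
        + (!![-(lamB B), -(CB q); CB r, lamB B] * Rhat r r' R
            - Rhat r r' R * !![-(lamB B), -(CB q); CB r, lamB B]) = 0) ∧
    (Rhat r r' R).trace = 2 ∧
    (Rhat r r' R).det = 0 ∧
    Rhat r r' R = (Rmat aN bN cN).map (coeffMap ⟨fun x => ev x, map_zero ev⟩) :=
  toda_resolvent_conjugation_general eb del hdeps lam q r v w r' hr' hqr hdr R hR delN hdelN aN bN
    cN hRN ev hevq hevr heve

end
end
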